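/- arXiv:2212.10824 — 6 statements merged into one kernel-verified Lean document; each statement's English description precedes it below -/
import Mathlib

section
/- Let Z = {A_{ij} : (i,j) ∈ D} be a bivariate P-polynomial association scheme of type (α,β) on a domain D ⊆ ℕ². Then for every (i,j) ∈ D, the (α,β)-compatible bivariate real polynomial v_{ij}(x,y) of degree (i,j) satisfying A_{ij} = v_{ij}(A_{10}, A_{01}) is unique. -/
open Matrix Finset
open scoped Classical

noncomputable section

/-- Exponent vector of the monomial `x^m * y^n` in `MvPolynomial (Fin 2) ℝ`. -/
def mexp (m n : ℕ) : Fin 2 →₀ ℕ := Finsupp.single 0 m + Finsupp.single 1 n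

/-- The partial order `⪯_{(α,β)}` on `ℕ × ℕ`. -/
def abLE (a b : ℝ) (p q : ℕ × ℕ) : Prop :=
  (p.1 : ℝ) + a * p.2 ≤ (q.1 : ℝ) + a * q.2 ∧
  b * p.1 + (p.2 : ℝ) ≤ b * q.1 + (q.2 : ℝ)

/-- An `(α,β)`-compatible bivariate polynomial of degree `(i,j)`. -/
def CompatPoly (a b : ℝ) (ij : ℕ × ℕ) (v : MvPolynomial (Fin 2) ℝ) : Prop :=
  v.coeff (mexp ij.1 ij.2) ≠ 0 ∧
  ∀ m n : ℕ, v.coeff (mexp m n) ≠ 0 → abLE a b (m, n) ij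

/-- An `(α,β)`-compatible subset of `ℕ × ℕ`. -/
def CompatSet (a b : ℝ) (D : Set (ℕ × ℕ)) : Prop :=
  ∀ p q : ℕ × ℕ, q ∈ D → abLE a b p q → p ∈ D

/-- Evaluation `v(M,N) = Σ c_{mn} M^m N^n` of a bivariate polynomial at two matrices. -/
def evalMat {V : Type*} [Fintype V] [DecidableEq V]
    (v : MvPolynomial (Fin 2) ℝ) (M N : Matrix V V ℝ) : Matrix V V ℝ :=
  ∑ d ∈ v.support, v.coeff d • (M ^ d 0 * N ^ d 1)

/-- A symmetric association scheme whose adjacency matrices are labeled by a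
finite subset `D` of `ℕ × ℕ`, with identity label `(0,0)` and given intersection numbers. -/
structure BivScheme (V : Type*) [Fintype V] [DecidableEq V] (D : Finset (ℕ × ℕ)) where
  A : ℕ × ℕ → Matrix V V ℝ
  mem00 : (0, 0) ∈ D
  nonzero : ∀ p ∈ D, A p ≠ 0
  entries : ∀ p ∈ D, ∀ x y, A p x y = 0 ∨ A p x y = 1
  identity : A (0, 0) = 1
  sum_eq : ∑ p ∈ D, A p = Matrix.of fun _ _ => (1 : ℝ)
  symm : ∀ p ∈ D, (A p)ᵀ = A p
  inter : ℕ × ℕ → ℕ × ℕ → ℕ × ℕ → ℝ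
  mul_eq : ∀ p ∈ D, ∀ q ∈ D, A p * A q = ∑ r ∈ D, inter p q r • A r
  comm : ∀ p ∈ D, ∀ q ∈ D, A p * A q = A q * A p

/-- Bivariate `P`-polynomial association scheme of type `(α,β)` on `D`
(with the given labeling). -/
def BivPPoly {V : Type*} [Fintype V] [DecidableEq V] {D : Finset (ℕ × ℕ)}
    (S : BivScheme V D) (a b : ℝ) : Prop :=
  CompatSet a b ↑D ∧
  ∀ p ∈ D, ∃ v : MvPolynomial (Fin 2) ℝ, CompatPoly a b p v ∧
    S.A p = evalMat v (S.A (1, 0)) (S.A (0, 1))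

lemma mexp_apply0 (m n : ℕ) : mexp m n 0 = m := by
  simp [mexp, Finsupp.single_apply]

lemma mexp_apply1 (m n : ℕ) : mexp m n 1 = n := by
  simp [mexp, Finsupp.single_apply]

lemma eq_mexp (d : Fin 2 →₀ ℕ) : d = mexp (d 0) (d 1) := by
  ext i
  fin_cases i
  · simp [mexp_apply0]
  · simp [mexp_apply1]

lemma abLE_refl (a b : ℝ) (p : ℕ × ℕ) : abLE a b p p := ⟨le_refl _, le_refl _⟩

lemma abLE_trans {a b : ℝ} {p q r : ℕ × ℕ} (h1 : abLE a b p q) (h2 : abLE a b q r) :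
    abLE a b p r := ⟨h1.1.trans h2.1, h1.2.trans h2.2⟩

lemma abLE_antisymm {a b : ℝ} (ha0 : 0 ≤ a) (ha1 : a ≤ 1) (hb0 : 0 ≤ b) (hb1 : b < 1)
    {p q : ℕ × ℕ} (h1 : abLE a b p q) (h2 : abLE a b q p) : p = q := by
  obtain ⟨h11, h12⟩ := h1
  obtain ⟨h21, h22⟩ := h2
  have hab : a * b < 1 := lt_of_le_of_lt (by nlinarith) hb1
  have h2' : (p.2 : ℝ) = q.2 := by nlinarith
  have h1' : (p.1 : ℝ) = q.1 := by nlinarith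
  have := Nat.cast_injective (R := ℝ) h1'
  have := Nat.cast_injective (R := ℝ) h2'
  exact Prod.ext ‹p.1 = q.1› ‹p.2 = q.2›

/-- If `q ⪯ p` and the linear functional value of `p` is at most that of `q`, then `p ⪯ q`. -/
lemma abLE_of_f {a b : ℝ} {p q : ℕ × ℕ} (h : abLE a b q p)
    (hf : (1 + b) * p.1 + (1 + a) * p.2 ≤ (1 + b) * q.1 + (1 + a) * q.2) :
    abLE a b p q := by
  obtain ⟨h1, h2⟩ := h
  constructor <;> linarith

lemma evalMat_eq_sum_subset {V : Type*} [Fintype V] [DecidableEq V]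
    (v : MvPolynomial (Fin 2) ℝ) (M N : Matrix V V ℝ) {s : Finset (Fin 2 →₀ ℕ)}
    (h : v.support ⊆ s) :
    evalMat v M N = ∑ d ∈ s, v.coeff d • (M ^ d 0 * N ^ d 1) :=
  Finset.sum_subset h (fun d _ hd => by
    simp [MvPolynomial.notMem_support_iff.mp hd])

/-- linear independence of the adjacency matrices -/
lemma indepA {V : Type*} [Fintype V] [DecidableEq V] {D : Finset (ℕ × ℕ)}
    (S : BivScheme V D) (e : ℕ × ℕ → ℝ) (h : ∑ p ∈ D, e p • S.A p = 0) :
    ∀ q ∈ D, e q = 0 := by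
  intro q hq
  -- find an entry where A q is 1
  have hne := S.nonzero q hq
  have hxy : ∃ x y, S.A q x y ≠ 0 := by
    by_contra hc
    push_neg at hc
    exact hne (by ext x y; simp [hc x y])
  obtain ⟨x, y, hxy⟩ := hxy
  have hq1 : S.A q x y = 1 := (S.entries q hq x y).resolve_left hxy
  -- the sum of all entries at (x,y) is 1
  have hsum1 : ∑ p ∈ D, S.A p x y = 1 := by
    have := congrFun (congrFun S.sum_eq x) y
    simpa [Matrix.sum_apply] using this
  -- so all other entries vanish
  have herase : ∑ p ∈ D.erase q, S.A p x y = 0 := by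
    have h2 := Finset.add_sum_erase D (fun p => S.A p x y) hq
    rw [hq1] at h2
    rw [← h2] at hsum1
    linarith
  have hzero : ∀ p ∈ D.erase q, S.A p x y = 0 := by
    rw [Finset.sum_eq_zero_iff_of_nonneg] at herase
    · exact herase
    · intro p hp
      rcases S.entries p (Finset.mem_of_mem_erase hp) x y with h0 | h1
      · rw [h0]
      · rw [h1]; norm_num
  -- evaluate the linear relation at (x,y)
  have h0 : ∑ p ∈ D, e p * S.A p x y = 0 := by
    have := congrFun (congrFun (congrArg (fun m : Matrix V V ℝ => (m : Matrix V V ℝ)) h) x) y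
    simpa [Matrix.sum_apply] using this
  rw [← Finset.add_sum_erase D (fun p => e p * S.A p x y) hq] at h0
  rw [Finset.sum_eq_zero (fun p hp => by rw [hzero p hp, mul_zero])] at h0
  simpa [hq1] using h0

lemma expand {V : Type*} [Fintype V] [DecidableEq V] {D : Finset (ℕ × ℕ)}
    (S : BivScheme V D) (a b : ℝ)
    (ha0 : 0 ≤ a) (ha1 : a ≤ 1) (hb0 : 0 ≤ b) (hb1 : b < 1)
    (hP : BivPPoly S a b) :
    ∀ k : ℕ, ∀ p ∈ D, (D.filter (fun q => abLE a b q p)).card ≤ k →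
    ∃ c : ℕ × ℕ → ℝ, c p ≠ 0 ∧ (∀ q, c q ≠ 0 → q ∈ D ∧ abLE a b q p) ∧
      S.A (1, 0) ^ p.1 * S.A (0, 1) ^ p.2 = ∑ q ∈ D, c q • S.A q := by
  intro k
  induction k with
  | zero =>
      intro p hp hcard
      exfalso
      have hmem : p ∈ D.filter (fun q => abLE a b q p) :=
        Finset.mem_filter.mpr ⟨hp, abLE_refl a b p⟩
      have := Finset.card_pos.mpr ⟨p, hmem⟩
      omega
  | succ k ih =>
      intro p hp hcard
      obtain ⟨v, ⟨hlead, hcomp⟩, hEval⟩ := hP.2 p hp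
      set M := S.A (1, 0) with hM
      set N := S.A (0, 1) with hN
      set e : Fin 2 →₀ ℕ := mexp p.1 p.2 with he_def
      have he : e ∈ v.support := MvPolynomial.mem_support_iff.mpr hlead
      have hd_facts : ∀ d ∈ v.support.erase e,
          ((d 0, d 1) : ℕ × ℕ) ∈ D ∧ abLE a b (d 0, d 1) p ∧ ((d 0, d 1) : ℕ × ℕ) ≠ p := by
        intro d hd
        have hdne := Finset.ne_of_mem_erase hd
        have hdsupp := Finset.mem_of_mem_erase hd
        have hcd : v.coeff (mexp (d 0) (d 1)) ≠ 0 := by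
          rw [← eq_mexp d]; exact MvPolynomial.mem_support_iff.mp hdsupp
        have hle := hcomp (d 0) (d 1) hcd
        have hne : ((d 0, d 1) : ℕ × ℕ) ≠ p := by
          intro hcontra
          apply hdne
          have h0 : d 0 = p.1 := congrArg Prod.fst hcontra
          have h1 : d 1 = p.2 := congrArg Prod.snd hcontra
          rw [eq_mexp d, h0, h1]
        have hmemD : ((d 0, d 1) : ℕ × ℕ) ∈ D :=
          Finset.mem_coe.mp (hP.1 (d 0, d 1) p (Finset.mem_coe.mpr hp) hle)
        exact ⟨hmemD, hle, hne⟩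
      have hchoose : ∀ d, d ∈ v.support.erase e →
          ∃ c : ℕ × ℕ → ℝ, (∀ q, c q ≠ 0 → q ∈ D ∧ abLE a b q (d 0, d 1)) ∧
            M ^ d 0 * N ^ d 1 = ∑ q ∈ D, c q • S.A q := by
        intro d hd
        obtain ⟨hD, hle, hne⟩ := hd_facts d hd
        have hsub : D.filter (fun q => abLE a b q (d 0, d 1)) ⊂
            D.filter (fun q => abLE a b q p) := by
          constructor
          · intro q hq
            rw [Finset.mem_filter] at *
            exact ⟨hq.1, abLE_trans hq.2 hle⟩
          · intro hss
            have hpin := hss (Finset.mem_filter.mpr ⟨hp, abLE_refl a b p⟩)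
            exact hne (abLE_antisymm ha0 ha1 hb0 hb1 hle (Finset.mem_filter.mp hpin).2)
        have hlt := Finset.card_lt_card hsub
        obtain ⟨c, _, hc2, hc3⟩ := ih (d 0, d 1) hD (by omega)
        exact ⟨c, hc2, hc3⟩
      choose! cf hcf1 hcf2 using hchoose
      -- cf d p = 0 for each d in the erase set
      have hcfp : ∀ d ∈ v.support.erase e, cf d p = 0 := by
        intro d hd
        by_contra hne0
        obtain ⟨_, hle⟩ := hcf1 d hd p hne0
        obtain ⟨_, hle', hne⟩ := hd_facts d hd
        exact hne (abLE_antisymm ha0 ha1 hb0 hb1 hle' hle)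
      refine ⟨fun q => (v.coeff e)⁻¹ *
          ((if q = p then 1 else 0) - ∑ d ∈ v.support.erase e, v.coeff d * cf d q),
          ?_, ?_, ?_⟩
      · -- c p ≠ 0
        have : ∑ d ∈ v.support.erase e, v.coeff d * cf d p = 0 :=
          Finset.sum_eq_zero (fun d hd => by rw [hcfp d hd, mul_zero])
        simp [this, hlead]
      · -- support condition
        intro q hq
        by_cases hqp : q = p
        · subst hqp; exact ⟨hp, abLE_refl a b q⟩
        · have hs : ∑ d ∈ v.support.erase e, v.coeff d * cf d q ≠ 0 := by
            intro h0
            apply hq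
            simp [hqp, h0]
          obtain ⟨d, hd, hdne0⟩ := Finset.exists_ne_zero_of_sum_ne_zero hs
          have hcfq : cf d q ≠ 0 := fun h => hdne0 (by rw [h, mul_zero])
          obtain ⟨hqD, hqle⟩ := hcf1 d hd q hcfq
          exact ⟨hqD, abLE_trans hqle (hd_facts d hd).2.1⟩
      · -- the expansion identity
        have hA : S.A p = v.coeff e • (M ^ p.1 * N ^ p.2) +
            ∑ d ∈ v.support.erase e, v.coeff d • (M ^ d 0 * N ^ d 1) := by
          rw [hEval]
          show evalMat v M N = _
          rw [evalMat, ← Finset.add_sum_erase _ _ he]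
          have h0 : e 0 = p.1 := by rw [he_def, mexp_apply0]
          have h1 : e 1 = p.2 := by rw [he_def, mexp_apply1]
          rw [h0, h1]
        have key : ∑ q ∈ D, ((v.coeff e)⁻¹ *
              ((if q = p then 1 else 0) - ∑ d ∈ v.support.erase e, v.coeff d * cf d q)) • S.A q
            = (v.coeff e)⁻¹ • ((S.A p) -
              ∑ d ∈ v.support.erase e, v.coeff d • (M ^ d 0 * N ^ d 1)) := by
          simp only [mul_smul]
          rw [← Finset.smul_sum]
          congr 1
          simp only [sub_smul]
          rw [Finset.sum_sub_distrib]
          congr 1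
          · simp only [ite_smul, one_smul, zero_smul]
            rw [Finset.sum_ite_eq' D p, if_pos hp]
          · simp only [Finset.sum_smul]
            rw [Finset.sum_comm]
            refine Finset.sum_congr rfl (fun d hd => ?_)
            simp only [mul_smul]
            rw [← Finset.smul_sum, ← hcf2 d hd]
        rw [key]
        have : (S.A p) - ∑ d ∈ v.support.erase e, v.coeff d • (M ^ d 0 * N ^ d 1)
            = v.coeff e • (M ^ p.1 * N ^ p.2) := sub_eq_iff_eq_add.mpr hA
        rw [this, smul_smul, inv_mul_cancel₀ hlead, one_smul]

/-- uniqueness of the compatible polynomials of a bivariate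
P-polynomial association scheme. -/
theorem uniqueness_of_bivariate_polynomials
    {V : Type*} [Fintype V] [DecidableEq V] {D : Finset (ℕ × ℕ)}
    (S : BivScheme V D) (a b : ℝ)
    (ha0 : 0 ≤ a) (ha1 : a ≤ 1) (hb0 : 0 ≤ b) (hb1 : b < 1)
    (h10 : (1, 0) ∈ D) (h01 : (0, 1) ∈ D)
    (hP : BivPPoly S a b) :
    ∀ p ∈ D, ∀ v w : MvPolynomial (Fin 2) ℝ,
      CompatPoly a b p v → S.A p = evalMat v (S.A (1, 0)) (S.A (0, 1)) →
      CompatPoly a b p w → S.A p = evalMat w (S.A (1, 0)) (S.A (0, 1)) →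
      v = w := by
  intro p hp v w hv hvE hw hwE
  set M := S.A (1, 0) with hM
  set N := S.A (0, 1) with hN
  by_contra hne
  set s : Finset (Fin 2 →₀ ℕ) := v.support ∪ w.support with hs
  have hsum0 : ∑ d ∈ s, (v.coeff d - w.coeff d) • (M ^ d 0 * N ^ d 1) = 0 := by
    have h1 : ∑ d ∈ s, (v.coeff d - w.coeff d) • (M ^ d 0 * N ^ d 1)
        = (∑ d ∈ s, v.coeff d • (M ^ d 0 * N ^ d 1))
          - ∑ d ∈ s, w.coeff d • (M ^ d 0 * N ^ d 1) := by
      rw [← Finset.sum_sub_distrib]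
      exact Finset.sum_congr rfl fun d _ => sub_smul _ _ _
    rw [h1, ← evalMat_eq_sum_subset v M N Finset.subset_union_left,
        ← evalMat_eq_sum_subset w M N Finset.subset_union_right, ← hvE, ← hwE, sub_self]
  set T := s.filter (fun d => v.coeff d - w.coeff d ≠ 0) with hT
  have hTne : T.Nonempty := by
    have hd' : ∃ d, v.coeff d ≠ w.coeff d := by
      by_contra hc
      push_neg at hc
      exact hne (MvPolynomial.ext _ _ fun d => hc d)
    obtain ⟨d, hd⟩ := hd'
    refine ⟨d, Finset.mem_filter.mpr ⟨?_, sub_ne_zero.mpr hd⟩⟩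
    by_contra hns
    simp only [hs, Finset.mem_union, MvPolynomial.mem_support_iff, not_or, not_not] at hns
    exact hd (by rw [hns.1, hns.2])
  have hTsum : ∑ d ∈ T, (v.coeff d - w.coeff d) • (M ^ d 0 * N ^ d 1) = 0 := by
    rw [← hsum0]
    exact Finset.sum_filter_of_ne (fun d _ hfd => by
      intro h0
      exact hfd (by rw [h0, zero_smul]))
  have hTD : ∀ d ∈ T, ((d 0, d 1) : ℕ × ℕ) ∈ D ∧ abLE a b (d 0, d 1) p := by
    intro d hd
    have hg := (Finset.mem_filter.mp hd).2
    have hvw : v.coeff d ≠ 0 ∨ w.coeff d ≠ 0 := by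
      by_contra hc
      push_neg at hc
      exact hg (by rw [hc.1, hc.2, sub_self])
    have hle : abLE a b (d 0, d 1) p := by
      rcases hvw with h | h
      · exact hv.2 (d 0) (d 1) (by rw [← eq_mexp d]; exact h)
      · exact hw.2 (d 0) (d 1) (by rw [← eq_mexp d]; exact h)
    exact ⟨Finset.mem_coe.mp (hP.1 _ p (Finset.mem_coe.mpr hp) hle), hle⟩
  have hch : ∀ d, d ∈ T → ∃ c : ℕ × ℕ → ℝ, c (d 0, d 1) ≠ 0 ∧
      (∀ q, c q ≠ 0 → q ∈ D ∧ abLE a b q (d 0, d 1)) ∧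
      M ^ d 0 * N ^ d 1 = ∑ q ∈ D, c q • S.A q := by
    intro d hd
    exact expand S a b ha0 ha1 hb0 hb1 hP _ (d 0, d 1) (hTD d hd).1 le_rfl
  choose! cf hcf0 hcf1 hcf2 using hch
  have hbasis : ∑ q ∈ D, (∑ d ∈ T, (v.coeff d - w.coeff d) * cf d q) • S.A q = 0 := by
    calc ∑ q ∈ D, (∑ d ∈ T, (v.coeff d - w.coeff d) * cf d q) • S.A q
        = ∑ q ∈ D, ∑ d ∈ T, ((v.coeff d - w.coeff d) * cf d q) • S.A q := by
          simp only [Finset.sum_smul]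
      _ = ∑ d ∈ T, ∑ q ∈ D, ((v.coeff d - w.coeff d) * cf d q) • S.A q := Finset.sum_comm
      _ = ∑ d ∈ T, (v.coeff d - w.coeff d) • (M ^ d 0 * N ^ d 1) := by
          refine Finset.sum_congr rfl fun d hd => ?_
          simp only [mul_smul]
          rw [← Finset.smul_sum, ← hcf2 d hd]
      _ = 0 := hTsum
  have hzero := indepA S _ hbasis
  obtain ⟨dm, hdm, hmax⟩ :=
    T.exists_max_image (fun d => (1 + b) * (d 0 : ℝ) + (1 + a) * (d 1 : ℝ)) hTne
  have hq := hzero (dm 0, dm 1) (hTD dm hdm).1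
  have hsingle : ∑ d ∈ T, (v.coeff d - w.coeff d) * cf d (dm 0, dm 1)
      = (v.coeff dm - w.coeff dm) * cf dm (dm 0, dm 1) := by
    apply Finset.sum_eq_single_of_mem dm hdm
    intro d hd hdne
    by_contra h0
    have hcfne : cf d (dm 0, dm 1) ≠ 0 := fun h => h0 (by rw [h, mul_zero])
    obtain ⟨_, hle⟩ := hcf1 d hd _ hcfne
    have hback : abLE a b (d 0, d 1) (dm 0, dm 1) := abLE_of_f hle (hmax d hd)
    have heq := abLE_antisymm ha0 ha1 hb0 hb1 hle hback
    apply hdne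
    have h0' : dm 0 = d 0 := congrArg Prod.fst heq
    have h1' : dm 1 = d 1 := congrArg Prod.snd heq
    rw [eq_mexp d, eq_mexp dm, h0', h1']
  rw [hsingle] at hq
  exact (mul_ne_zero (Finset.mem_filter.mp hdm).2 (hcf0 dm hdm)) hq
end
end

section
/- Let Z = {A_{ij} : (i,j) ∈ D} be a bivariate P-polynomial association scheme of type (α,β) on a domain D ⊆ ℕ². Then the family of matrices {A_{10}^m A_{01}^n : (m,n) ∈ D} is linearly independent over ℝ. -/
open Matrix Finset
open scoped Classical

noncomputable section

lemma mexp_eq (d : Fin 2 →₀ ℕ) : mexp (d 0) (d 1) = d := by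
  ext i
  fin_cases i <;> simp [mexp, Finsupp.single_apply]

/-- for a bivariate P-polynomial association scheme of type (α,β) on D,
the family of matrices A₁₀^m A₀₁^n, (m,n) ∈ D, is linearly independent over ℝ. -/
theorem linearIndependent_monomials_of_bivPPoly
    {V : Type*} [Fintype V] [DecidableEq V] {D : Finset (ℕ × ℕ)}
    (S : BivScheme V D) (a b : ℝ)
    (ha0 : 0 ≤ a) (ha1 : a ≤ 1) (hb0 : 0 ≤ b) (hb1 : b < 1)
    (h10 : (1, 0) ∈ D) (h01 : (0, 1) ∈ D)
    (hP : BivPPoly S a b) :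
    LinearIndependent ℝ
      (fun p : {q : ℕ × ℕ // q ∈ D} => S.A (1, 0) ^ p.1.1 * S.A (0, 1) ^ p.1.2) := by
  classical
  set M : {q : ℕ × ℕ // q ∈ D} → Matrix V V ℝ :=
    fun p => S.A (1, 0) ^ p.1.1 * S.A (0, 1) ^ p.1.2 with hM
  -- The adjacency matrices are linearly independent.
  have hA : LinearIndependent ℝ (fun p : {q : ℕ × ℕ // q ∈ D} => S.A p.1) := by
    rw [Fintype.linearIndependent_iff]
    intro g hg i
    obtain ⟨p, hp⟩ := i
    have hne := S.nonzero p hp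
    have hex : ∃ x y, S.A p x y = 1 := by
      by_contra h
      push_neg at h
      apply hne
      ext x y
      rcases S.entries p hp x y with h0 | h1
      · simpa using h0
      · exact absurd h1 (h x y)
    obtain ⟨x, y, hxy⟩ := hex
    have hsum : ∑ q ∈ D, S.A q x y = 1 := by
      have h := congrFun (congrFun S.sum_eq x) y
      simpa [Matrix.sum_apply] using h
    have hzero : ∀ q ∈ D, q ≠ p → S.A q x y = 0 := by
      intro q hq hqp
      have herase : ∑ r ∈ D.erase p, S.A r x y = 0 := by
        have h : S.A p x y + ∑ r ∈ D.erase p, S.A r x y = 1 := by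
          rw [Finset.add_sum_erase D (fun r => S.A r x y) hp]; exact hsum
        rw [hxy] at h
        linarith
      have nonneg : ∀ r ∈ D.erase p, 0 ≤ S.A r x y := by
        intro r hr
        rcases S.entries r (Finset.mem_of_mem_erase hr) x y with h | h <;> rw [h] <;> norm_num
      exact (Finset.sum_eq_zero_iff_of_nonneg nonneg).mp herase q
        (Finset.mem_erase.mpr ⟨hqp, hq⟩)
    have hent : ∑ j : {q : ℕ × ℕ // q ∈ D}, g j * S.A j.1 x y = 0 := by
      have h := congrFun (congrFun hg x) y
      simpa [Matrix.sum_apply] using h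
    have hsingle : ∑ j : {q : ℕ × ℕ // q ∈ D}, g j * S.A j.1 x y
        = g ⟨p, hp⟩ * S.A p x y := by
      refine Finset.sum_eq_single _ (fun j _ hj => ?_) (fun h => absurd (Finset.mem_univ _) h)
      rw [hzero j.1 j.2 (fun hc => hj (Subtype.ext hc)), mul_zero]
    rw [hsingle, hxy, mul_one] at hent
    exact hent
  -- each A_p lies in the span of the monomials
  have hspan : ∀ i : {q : ℕ × ℕ // q ∈ D},
      S.A i.1 ∈ Submodule.span ℝ (Set.range M) := by
    rintro ⟨p, hp⟩
    obtain ⟨v, ⟨hc, hcompat⟩, hAe⟩ := hP.2 p hp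
    rw [hAe, evalMat]
    refine Submodule.sum_mem _ (fun d hd => Submodule.smul_mem _ _ ?_)
    have hco : v.coeff (mexp (d 0) (d 1)) ≠ 0 := by
      rw [mexp_eq]; exact MvPolynomial.mem_support_iff.mp hd
    have hmem : (d 0, d 1) ∈ D := hP.1 (d 0, d 1) p hp (hcompat _ _ hco)
    exact Submodule.subset_span ⟨⟨(d 0, d 1), hmem⟩, rfl⟩
  rw [linearIndependent_iff_card_eq_finrank_span]
  have h1 : Set.finrank ℝ (Set.range M) ≤ Fintype.card {q : ℕ × ℕ // q ∈ D} :=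
    finrank_range_le_card M
  have h2 : Fintype.card {q : ℕ × ℕ // q ∈ D} ≤ Set.finrank ℝ (Set.range M) := by
    have hle : Submodule.span ℝ (Set.range fun p : {q : ℕ × ℕ // q ∈ D} => S.A p.1)
        ≤ Submodule.span ℝ (Set.range M) := by
      rw [Submodule.span_le]
      rintro _ ⟨i, rfl⟩
      exact hspan i
    have := Submodule.finrank_mono hle
    rw [finrank_span_eq_card hA] at this
    exact this
  omega
end
end

section
/- Let {A_{ij} : (i,j) ∈ D} be a symmetric association scheme with D an (α,β)-compatible subset of ℕ², and let E_{mn}, (m,n) ∈ D*, be its primitive idempotents with eigenvalues p_{ij}(m,n). Suppose that for every (i,j) ∈ D there is an (α,β)-compatible bivariate polynomial v_{ij}(x,y) of degree (i,j) such that p_{ij}(m,n) = v_{ij}(θ_{mn}, μ_{mn}) for all (m,n) ∈ D*, where θ_{mn} = p_{10}(m,n) and μ_{mn} = p_{01}(m,n). Then this scheme is a bivariate P-polynomial association scheme of type (α,β) on D, with A_{ij} = v_{ij}(A_{10}, A_{01}). -/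
open Matrix Finset
open scoped Classical

noncomputable section

/-- conversely, if the eigenvalues of an association scheme on an
(α,β)-compatible domain D are given by (α,β)-compatible bivariate polynomials
evaluated at the eigenvalues of A₁₀ and A₀₁, then the scheme is a bivariate
P-polynomial association scheme of type (α,β) on D, with A_{ij} = v_{ij}(A₁₀, A₀₁). -/
theorem bivPPoly_of_eigenvalues_poly
    {V : Type*} [Fintype V] [DecidableEq V] {D : Finset (ℕ × ℕ)}
    (S : BivScheme V D) (a b : ℝ)
    (ha0 : 0 ≤ a) (ha1 : a ≤ 1) (hb0 : 0 ≤ b) (hb1 : b < 1)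
    (h10 : (1, 0) ∈ D) (h01 : (0, 1) ∈ D)
    (hD : CompatSet a b ↑D)
    -- the primitive idempotents, labeled by a set D* of the same cardinality as D
    (Dstar : Finset (ℕ × ℕ)) (hcard : Dstar.card = D.card)
    (E : ℕ × ℕ → Matrix V V ℝ)
    (hEne : ∀ q ∈ Dstar, E q ≠ 0)
    (hEsymm : ∀ q ∈ Dstar, (E q)ᵀ = E q)
    (hEmul : ∀ q ∈ Dstar, ∀ r ∈ Dstar, E q * E r = if q = r then E q else 0)
    (hEsum : ∑ q ∈ Dstar, E q = 1)
    -- the eigenvalues p_{ij}(m,n)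
    (peig : ℕ × ℕ → ℕ × ℕ → ℝ)
    (hA : ∀ p ∈ D, S.A p = ∑ q ∈ Dstar, peig p q • E q)
    -- the eigenvalues are given by (α,β)-compatible bivariate polynomials
    (v : ℕ × ℕ → MvPolynomial (Fin 2) ℝ)
    (hcompat : ∀ p ∈ D, CompatPoly a b p (v p))
    (heig : ∀ p ∈ D, ∀ q ∈ Dstar,
      peig p q =
        MvPolynomial.eval
          (fun t : Fin 2 => if t = 0 then peig (1, 0) q else peig (0, 1) q) (v p)) :
    (∀ p ∈ D, S.A p = evalMat (v p) (S.A (1, 0)) (S.A (0, 1))) ∧ BivPPoly S a b := by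

  have hmul : ∀ g h : ℕ × ℕ → ℝ,
      (∑ q ∈ Dstar, g q • E q) * (∑ q ∈ Dstar, h q • E q)
        = ∑ q ∈ Dstar, (g q * h q) • E q := by
    intro g h
    rw [Finset.sum_mul_sum]
    rw [Finset.sum_congr rfl (fun q hq => Finset.sum_congr rfl
      (fun r hr => by rw [smul_mul_smul_comm, hEmul q hq r hr]))]
    refine Finset.sum_congr rfl fun q hq => ?_
    rw [Finset.sum_eq_single q]
    · simp
    · intro r hr hne; simp [Ne.symm hne]
    · intro hq'; exact absurd hq hq'
  have hpow : ∀ (g : ℕ × ℕ → ℝ) (m : ℕ),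
      (∑ q ∈ Dstar, g q • E q) ^ m = ∑ q ∈ Dstar, (g q) ^ m • E q := by
    intro g m
    induction m with
    | zero => simp [hEsum]
    | succ m ih => rw [pow_succ, ih, hmul]; simp [pow_succ]
  have key : ∀ p ∈ D, S.A p = evalMat (v p) (S.A (1, 0)) (S.A (0, 1)) := by
    intro p hp
    rw [evalMat, hA (1,0) h10, hA (0,1) h01]
    have : ∀ d ∈ (v p).support,
        (v p).coeff d • ((∑ q ∈ Dstar, peig (1,0) q • E q) ^ d 0 *
          (∑ q ∈ Dstar, peig (0,1) q • E q) ^ d 1)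
        = ∑ q ∈ Dstar, ((v p).coeff d * (peig (1,0) q ^ d 0 * peig (0,1) q ^ d 1)) • E q := by
      intro d _
      rw [hpow, hpow, hmul, Finset.smul_sum]
      exact Finset.sum_congr rfl fun q hq => by rw [smul_smul]
    rw [Finset.sum_congr rfl this, Finset.sum_comm, hA p hp]
    refine Finset.sum_congr rfl fun q hq => ?_
    rw [← Finset.sum_smul, heig p hp q hq, MvPolynomial.eval_eq']
    congr 1
    refine Finset.sum_congr rfl fun d _ => ?_
    congr 1
    rw [Fin.prod_univ_two]
    norm_num
  refine ⟨key, hD, fun p hp => ⟨v p, hcompat p hp, key p hp⟩⟩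
end
end

section
/- Let Z be a symmetric association scheme on a set of size v with adjacency matrices {A_{ij} : (i,j) ∈ D} and primitive idempotents labeled {E_{ij} : (i,j) ∈ D*}, and define the dual eigenvalues q_{ij}(m,n) by E_{ij} = (1/v) Σ_{(m,n)∈D} q_{ij}(m,n) A_{mn}. Write θ*_{mn} = q_{10}(m,n) and μ*_{mn} = q_{01}(m,n). Then the following are equivalent: (i) Z is bivariate Q-polynomial of type (α,β) on D* (with this labeling); (iii) D* is (α,β)-compatible and for every (i,j) ∈ D* there is an (α,β)-compatible bivariate polynomial v*_{ij}(x,y) of degree (i,j) such that q_{ij}(m,n) = v*_{ij}(θ*_{mn}, μ*_{mn}) for all (m,n) ∈ D. -/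
open Matrix Finset
open scoped Classical

noncomputable section

/-- A symmetric association scheme with adjacency matrices indexed by a finite
type `ι`, identity label `i0`, and given intersection numbers. -/
structure Scheme (V : Type*) [Fintype V] [DecidableEq V] (ι : Type*) [Fintype ι] where
  A : ι → Matrix V V ℝ
  i0 : ι
  nonzero : ∀ i, A i ≠ 0
  entries : ∀ i x y, A i x y = 0 ∨ A i x y = 1
  identity : A i0 = 1
  sum_eq : ∑ i, A i = Matrix.of fun _ _ => (1 : ℝ)
  symm : ∀ i, (A i)ᵀ = A i
  inter : ι → ι → ι → ℝ
  mul_eq : ∀ i j, A i * A j = ∑ k, inter i j k • A k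
  comm : ∀ i j, A i * A j = A j * A i

/-- Entrywise (Hadamard-product) evaluation of a bivariate polynomial at two matrices. -/
def evalHad {V : Type*} (v : MvPolynomial (Fin 2) ℝ) (M N : Matrix V V ℝ) :
    Matrix V V ℝ :=
  Matrix.of fun x y =>
    MvPolynomial.eval (fun t : Fin 2 => if t = 0 then M x y else N x y) v

/-- Bivariate Q-polynomial property of type `(α,β)` on `D*` for a family of
idempotents `E` of an association scheme on a vertex set of size `v = Fintype.card V`:
`D*` is `(α,β)`-compatible and `v·E_{mn} = v*_{mn}(v·E_{10}, v·E_{01})` under the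
Hadamard product, with `v*_{mn}` an `(α,β)`-compatible polynomial of degree `(m,n)`. -/
def BivQPoly {V : Type*} [Fintype V] [DecidableEq V] (Dstar : Finset (ℕ × ℕ))
    (E : ℕ × ℕ → Matrix V V ℝ) (a b : ℝ) : Prop :=
  CompatSet a b ↑Dstar ∧
  ∀ p ∈ Dstar, ∃ w : MvPolynomial (Fin 2) ℝ, CompatPoly a b p w ∧
    (Fintype.card V : ℝ) • E p =
      evalHad w ((Fintype.card V : ℝ) • E (1, 0)) ((Fintype.card V : ℝ) • E (0, 1))

/-- an association scheme is bivariate Q-polynomial of type (α,β) on D*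
iff D* is (α,β)-compatible and the dual eigenvalues are given by (α,β)-compatible
bivariate polynomials evaluated at the dual eigenvalues of E₁₀ and E₀₁. -/
theorem bivQPoly_iff_dualEigenvalues_poly
    {V : Type*} [Fintype V] [DecidableEq V] {D : Finset (ℕ × ℕ)}
    (S : BivScheme V D) (a b : ℝ)
    (ha0 : 0 ≤ a) (ha1 : a ≤ 1) (hb0 : 0 ≤ b) (hb1 : b < 1)
    -- the primitive idempotents of the scheme, labeled by D*
    (Dstar : Finset (ℕ × ℕ)) (hcard : Dstar.card = D.card)
    (h00 : (0, 0) ∈ Dstar) (h10 : (1, 0) ∈ Dstar) (h01 : (0, 1) ∈ Dstar)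
    (E : ℕ × ℕ → Matrix V V ℝ)
    (hEne : ∀ q ∈ Dstar, E q ≠ 0)
    (hEsymm : ∀ q ∈ Dstar, (E q)ᵀ = E q)
    (hEmul : ∀ q ∈ Dstar, ∀ r ∈ Dstar, E q * E r = if q = r then E q else 0)
    (hEsum : ∑ q ∈ Dstar, E q = 1)
    (hE00 : E (0, 0) = (Fintype.card V : ℝ)⁻¹ • Matrix.of fun _ _ => (1 : ℝ))
    -- the dual eigenvalues q_{ij}(m,n), defined by E_{ij} = (1/v) Σ q_{ij}(mn) A_{mn}
    (qe : ℕ × ℕ → ℕ × ℕ → ℝ)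
    (hE : ∀ p ∈ Dstar,
      E p = (Fintype.card V : ℝ)⁻¹ • ∑ r ∈ D, qe p r • S.A r) :
    BivQPoly Dstar E a b ↔
      (CompatSet a b ↑Dstar ∧
       ∀ p ∈ Dstar, ∃ w : MvPolynomial (Fin 2) ℝ, CompatPoly a b p w ∧
         ∀ r ∈ D, qe p r =
           MvPolynomial.eval
             (fun t : Fin 2 => if t = 0 then qe (1, 0) r else qe (0, 1) r) w) := by
  classical
  have hne : Nonempty V := by
    by_contra h
    exact S.nonzero (0,0) S.mem00 (by ext x y; exact absurd ⟨x⟩ h)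
  have hv : (Fintype.card V : ℝ) ≠ 0 := by
    exact_mod_cast Fintype.card_ne_zero
  have hEv : ∀ p ∈ Dstar, (Fintype.card V : ℝ) • E p = ∑ r ∈ D, qe p r • S.A r := by
    intro p hp
    rw [hE p hp, smul_smul, mul_inv_cancel₀ hv, one_smul]
  have hpart : ∀ x y : V, ∃ r ∈ D, S.A r x y = 1 ∧
      ∀ r' ∈ D, r' ≠ r → S.A r' x y = 0 := by
    intro x y
    have hsum : ∑ r ∈ D, S.A r x y = 1 := by
      have := congrFun (congrFun (congrArg Matrix.of.symm S.sum_eq) x) y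
      simpa [Matrix.sum_apply] using this
    have hex : ∃ r ∈ D, S.A r x y ≠ 0 := by
      by_contra h
      push_neg at h
      rw [Finset.sum_eq_zero h] at hsum; norm_num at hsum
    obtain ⟨r, hr, hrne⟩ := hex
    have hr1 : S.A r x y = 1 := (S.entries r hr x y).resolve_left hrne
    refine ⟨r, hr, hr1, ?_⟩
    intro r' hr' hne'
    have hdec : S.A r x y + ∑ s ∈ D.erase r, S.A s x y = 1 := by
      rw [Finset.add_sum_erase D (fun s => S.A s x y) hr]; exact hsum
    have hz : ∑ s ∈ D.erase r, S.A s x y = 0 := by linarith [hdec]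
    have hnn : ∀ s ∈ D.erase r, 0 ≤ S.A s x y := by
      intro s hs
      rcases S.entries s (Finset.mem_of_mem_erase hs) x y with h|h <;> simp [h]
    exact (Finset.sum_eq_zero_iff_of_nonneg hnn).mp hz r'
      (Finset.mem_erase.mpr ⟨hne', hr'⟩)
  have hentry : ∀ p ∈ Dstar, ∀ x y : V, ∀ r ∈ D, S.A r x y = 1 →
      (∀ r' ∈ D, r' ≠ r → S.A r' x y = 0) →
      ((Fintype.card V : ℝ) • E p) x y = qe p r := by
    intro p hp x y r hr h1 h0
    rw [hEv p hp]
    rw [Matrix.sum_apply]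
    rw [Finset.sum_eq_single_of_mem r hr]
    · simp [Matrix.smul_apply, h1]
    · intro r' hr' hne'
      simp [Matrix.smul_apply, h0 r' hr' hne']
  constructor
  · rintro ⟨hD, hpoly⟩
    refine ⟨hD, ?_⟩
    intro p hp
    obtain ⟨w, hw, heq⟩ := hpoly p hp
    refine ⟨w, hw, ?_⟩
    intro r hr
    obtain ⟨x, y, hxy⟩ : ∃ x y, S.A r x y ≠ 0 := by
      by_contra h; push_neg at h
      exact S.nonzero r hr (by ext x y; simpa using h x y)
    obtain ⟨r0, hr0, h1, h0⟩ := hpart x y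
    have hrr0 : r = r0 := by
      by_contra h
      exact hxy (h0 r hr h)
    subst hrr0
    have e1 := hentry p hp x y r hr0 h1 h0
    have e10 := hentry (1,0) h10 x y r hr0 h1 h0
    have e01 := hentry (0,1) h01 x y r hr0 h1 h0
    have hent : qe p r = (evalHad w ((Fintype.card V : ℝ) • E (1,0))
        ((Fintype.card V : ℝ) • E (0,1))) x y := by
      rw [← e1, heq]
    rw [hent]
    simp only [evalHad, Matrix.of_apply]
    rw [e10, e01]
  · rintro ⟨hD, hpoly⟩
    refine ⟨hD, ?_⟩
    intro p hp
    obtain ⟨w, hw, heq⟩ := hpoly p hp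
    refine ⟨w, hw, ?_⟩
    ext x y
    obtain ⟨r, hr, h1, h0⟩ := hpart x y
    have e1 := hentry p hp x y r hr h1 h0
    have e10 := hentry (1,0) h10 x y r hr h1 h0
    have e01 := hentry (0,1) h01 x y r hr h1 h0
    rw [e1]
    simp only [evalHad, Matrix.of_apply]
    rw [e10, e01, heq r hr]
end
end

section
/- Let A_0, A_1, A_2 be a symmetric association scheme with two classes on a vertex set V of size v, with parameters k, b, c (c ≠ 0) such that A_1² = k A_0 + (k−1−b) A_1 + c A_2, A_1 A_2 = b A_1 + (k−c) A_2, and A_2² = (bk/c) A_0 + (bk/c − b) A_1 + (bk/c − 1 − k + c) A_2. For N ≥ 1 and i,j ≥ 0 with i+j ≤ N, let A_{ij} be the symmetrized matrices indexed by V^N defined by (A_{ij})_{x,y} = 1 if |{s : (A_1)_{x_s,y_s} = 1}| = i and |{s : (A_2)_{x_s,y_s} = 1}| = j, and 0 otherwise (with the convention A_{mn} = 0 when m < 0, n < 0 or m+n > N). Then A_{10} A_{ij} = k(N−i−j+1) A_{i−1,j} + (i(k−1−b) + j(k−c)) A_{ij} + (i+1) A_{i+1,j} + c(j+1) A_{i−1,j+1}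 + b(i+1) A_{i+1,j−1}. -/
open Matrix Finset
open scoped Classical

noncomputable section

/-- The symmetrization A_{ij} (indices in ℤ, zero matrix for out-of-range indices)
of a two-class association scheme: (A_{ij})_{x,y} = 1 iff exactly i coordinates s have
(A₁)_{x_s,y_s} = 1 and exactly j coordinates s have (A₂)_{x_s,y_s} = 1. -/
def symA {V : Type*} [Fintype V] [DecidableEq V] (A₁ A₂ : Matrix V V ℝ) (N : ℕ)
    (i j : ℤ) : Matrix (Fin N → V) (Fin N → V) ℝ :=
  Matrix.of fun x y =>
    if ((Finset.univ.filter fun s => A₁ (x s) (y s) = 1).card : ℤ) = i ∧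
       ((Finset.univ.filter fun s => A₂ (x s) (y s) = 1).card : ℤ) = j
    then 1 else 0


section SymHelpers

set_option linter.unusedSectionVars false

/-- intersection numbers p_{1,r'}^r of the two-class scheme. -/
def pval (k b c : ℝ) (r r' : ℕ) : ℝ :=
  if r = 0 then (if r' = 1 then k else 0)
  else if r = 1 then (if r' = 0 then 1 else if r' = 1 then k - 1 - b else b)
  else (if r' = 1 then c else if r' = 2 then k - c else 0)

/-- relation index of a pair of vertices. -/
def relOf {V : Type*} (A₁ A₂ : Matrix V V ℝ) (u w : V) : ℕ :=
  if A₁ u w = 1 then 1 else if A₂ u w = 1 then 2 else 0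

/-- per-coordinate contribution function. -/
def Gdef (k b c : ℝ) (m n i j : ℕ) (r : ℕ) : ℝ :=
  (if ((m:ℤ) - (if r = 1 then 1 else 0) = (i:ℤ) ∧ (n:ℤ) - (if r = 2 then 1 else 0) = (j:ℤ)) then 1 else 0) * pval k b c r 0
+ (if ((m:ℤ) - (if r = 1 then 1 else 0) + 1 = (i:ℤ) ∧ (n:ℤ) - (if r = 2 then 1 else 0) = (j:ℤ)) then 1 else 0) * pval k b c r 1
+ (if ((m:ℤ) - (if r = 1 then 1 else 0) = (i:ℤ) ∧ (n:ℤ) - (if r = 2 then 1 else 0) + 1 = (j:ℤ)) then 1 else 0) * pval k b c r 2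

theorem scalar_key (k b c : ℝ) (N m n i j : ℕ) :
    ((N:ℝ) - m - n) * Gdef k b c m n i j 0 + (m:ℝ) * Gdef k b c m n i j 1
      + (n:ℝ) * Gdef k b c m n i j 2 =
    (k * ((N : ℝ) - i - j + 1)) * (if ((m:ℤ) = (i:ℤ) - 1 ∧ (n:ℤ) = (j:ℤ)) then 1 else 0) +
    ((i : ℝ) * (k - 1 - b) + (j : ℝ) * (k - c)) * (if ((m:ℤ) = (i:ℤ) ∧ (n:ℤ) = (j:ℤ)) then 1 else 0) +
    ((i : ℝ) + 1) * (if ((m:ℤ) = (i:ℤ) + 1 ∧ (n:ℤ) = (j:ℤ)) then 1 else 0) +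
    (c * ((j : ℝ) + 1)) * (if ((m:ℤ) = (i:ℤ) - 1 ∧ (n:ℤ) = (j:ℤ) + 1) then 1 else 0) +
    (b * ((i : ℝ) + 1)) * (if ((m:ℤ) = (i:ℤ) + 1 ∧ (n:ℤ) = (j:ℤ) - 1) then 1 else 0) := by
  have E1 : (if ((m:ℤ) + 1 = (i:ℤ) ∧ n = j) then ((N:ℝ) - m - n) * k else 0)
      = (if ((m:ℤ) = (i:ℤ) - 1 ∧ n = j) then k * ((N:ℝ) - i - j + 1) else 0) := by
    by_cases h : (m:ℤ) + 1 = (i:ℤ) ∧ n = j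
    · rw [if_pos h, if_pos (show (m:ℤ) = (i:ℤ) - 1 ∧ n = j by omega)]
      have hi : (i:ℝ) = (m:ℝ) + 1 := by exact_mod_cast (show i = m + 1 by omega)
      have hj : (j:ℝ) = (n:ℝ) := by exact_mod_cast (show j = n by omega)
      rw [hi, hj]; ring
    · rw [if_neg h, if_neg (show ¬((m:ℤ) = (i:ℤ) - 1 ∧ n = j) by omega)]
  have E2 : (m:ℝ) * (if ((m:ℤ) - 1 = (i:ℤ) ∧ n = j) then (1:ℝ) else 0)
      = (if ((m:ℤ) = (i:ℤ) + 1 ∧ n = j) then (i:ℝ) + 1 else 0) := by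
    by_cases h : (m:ℤ) - 1 = (i:ℤ) ∧ n = j
    · rw [if_pos h, if_pos (show (m:ℤ) = (i:ℤ) + 1 ∧ n = j by omega)]
      have hi : (m:ℝ) = (i:ℝ) + 1 := by exact_mod_cast (show m = i + 1 by omega)
      rw [hi]; ring
    · rw [if_neg h, if_neg (show ¬((m:ℤ) = (i:ℤ) + 1 ∧ n = j) by omega)]; ring
  have E3 : (m:ℝ) * (if (m = i ∧ n = j) then k - 1 - b else 0)
        + (n:ℝ) * (if (m = i ∧ n = j) then k - c else 0)
      = (if (m = i ∧ n = j) then (i:ℝ) * (k - 1 - b) + (j:ℝ) * (k - c) else 0) := by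
    by_cases h : m = i ∧ n = j
    · rw [if_pos h, if_pos h, if_pos h]
      have hi : (m:ℝ) = (i:ℝ) := by exact_mod_cast h.1
      have hj : (n:ℝ) = (j:ℝ) := by exact_mod_cast h.2
      rw [hi, hj]
    · rw [if_neg h, if_neg h, if_neg h]; ring
  have E4 : (m:ℝ) * (if ((m:ℤ) - 1 = (i:ℤ) ∧ (n:ℤ) + 1 = (j:ℤ)) then b else 0)
      = (if ((m:ℤ) = (i:ℤ) + 1 ∧ (n:ℤ) = (j:ℤ) - 1) then b * ((i:ℝ) + 1) else 0) := by
    by_cases h : (m:ℤ) - 1 = (i:ℤ) ∧ (n:ℤ) + 1 = (j:ℤ)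
    · rw [if_pos h, if_pos (show (m:ℤ) = (i:ℤ) + 1 ∧ (n:ℤ) = (j:ℤ) - 1 by omega)]
      have hi : (m:ℝ) = (i:ℝ) + 1 := by exact_mod_cast (show m = i + 1 by omega)
      rw [hi]; ring
    · rw [if_neg h, if_neg (show ¬((m:ℤ) = (i:ℤ) + 1 ∧ (n:ℤ) = (j:ℤ) - 1) by omega)]; ring
  have E5 : (n:ℝ) * (if ((m:ℤ) + 1 = (i:ℤ) ∧ (n:ℤ) - 1 = (j:ℤ)) then c else 0)
      = (if ((m:ℤ) = (i:ℤ) - 1 ∧ (n:ℤ) = (j:ℤ) + 1) then c * ((j:ℝ) + 1) else 0) := by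
    by_cases h : (m:ℤ) + 1 = (i:ℤ) ∧ (n:ℤ) - 1 = (j:ℤ)
    · rw [if_pos h, if_pos (show (m:ℤ) = (i:ℤ) - 1 ∧ (n:ℤ) = (j:ℤ) + 1 by omega)]
      have hj : (n:ℝ) = (j:ℝ) + 1 := by exact_mod_cast (show n = j + 1 by omega)
      rw [hj]; ring
    · rw [if_neg h, if_neg (show ¬((m:ℤ) = (i:ℤ) - 1 ∧ (n:ℤ) = (j:ℤ) + 1) by omega)]; ring
  simp only [Gdef, pval]
  norm_num
  linear_combination E1 + E2 + E3 + E4 + E5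

lemma card_erase_ite {α : Type*} [DecidableEq α] (t : Finset α) (s : α) :
    (t.card : ℤ) = (t.erase s).card + if s ∈ t then 1 else 0 := by
  by_cases h : s ∈ t
  · rw [if_pos h]
    have := Finset.card_erase_add_one h
    omega
  · rw [if_neg h, Finset.erase_eq_of_notMem h]; ring

lemma cnt_update {V : Type*} [Fintype V] [DecidableEq V] {N : ℕ} (rel : V → V → ℕ)
    (x y : Fin N → V) (s : Fin N) (w : V) (r : ℕ) :
    ((Finset.univ.filter fun t => rel (Function.update x s w t) (y t) = r).card : ℤ)
      = ((Finset.univ.filter fun t => rel (x t) (y t) = r).card : ℤ)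
        - (if rel (x s) (y s) = r then 1 else 0) + (if rel w (y s) = r then 1 else 0) := by
  set f := Finset.univ.filter fun t => rel (x t) (y t) = r with hf
  set f' := Finset.univ.filter fun t => rel (Function.update x s w t) (y t) = r with hf'
  have he : f'.erase s = f.erase s := by
    ext t
    simp only [Finset.mem_erase, hf, hf', Finset.mem_filter, Finset.mem_univ, true_and]
    constructor
    · rintro ⟨hts, h⟩
      rw [Function.update_of_ne hts] at h
      exact ⟨hts, h⟩
    · rintro ⟨hts, h⟩
      refine ⟨hts, ?_⟩
      rwa [Function.update_of_ne hts]
  have h1 : s ∈ f' ↔ rel w (y s) = r := by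
    simp [hf', Function.update_self]
  have h2 : s ∈ f ↔ rel (x s) (y s) = r := by simp [hf]
  rw [card_erase_ite f' s, card_erase_ite f s, he]
  by_cases hw : rel w (y s) = r <;> by_cases hx : rel (x s) (y s) = r <;>
    simp [hw, hx, h1, h2]

lemma relOf_cases {V : Type*} (A₁ A₂ : Matrix V V ℝ) :
    ∀ u w : V, relOf A₁ A₂ u w = 0 ∨ relOf A₁ A₂ u w = 1 ∨ relOf A₁ A₂ u w = 2 := by
  intro u w
  unfold relOf
  split_ifs <;> simp

lemma bij_step {V : Type*} [Fintype V] [DecidableEq V] {N : ℕ} (rel : V → V → ℕ)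
    (hdiag : ∀ u, rel u u = 0) (hzero : ∀ u w, rel u w = 0 → u = w)
    (hcases : ∀ u w, rel u w = 0 ∨ rel u w = 1 ∨ rel u w = 2)
    (x : Fin N → V) (F : (Fin N → V) → ℝ) :
    (∑ z : Fin N → V, (if (((Finset.univ.filter fun s => rel (x s) (z s) = 1).card : ℤ) = 1 ∧
          ((Finset.univ.filter fun s => rel (x s) (z s) = 2).card : ℤ) = 0) then (1:ℝ) else 0) * F z)
      = ∑ p : Fin N × V, (if rel (x p.1) p.2 = 1 then (1:ℝ) else 0)
          * F (Function.update x p.1 p.2) := by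
  simp only [ite_mul, one_mul, zero_mul]
  rw [← Finset.sum_filter, ← Finset.sum_filter]
  refine (Finset.sum_bij (fun (p : Fin N × V) _ => Function.update x p.1 p.2) ?_ ?_ ?_ ?_).symm
  · rintro ⟨s, w⟩ hp
    simp only [Finset.mem_filter, Finset.mem_univ, true_and] at hp ⊢
    have hf1 : (Finset.univ.filter fun t => rel (x t) (Function.update x s w t) = 1) = {s} := by
      ext t
      simp only [Finset.mem_filter, Finset.mem_univ, true_and, Finset.mem_singleton]
      by_cases ht : t = s
      · subst ht; rw [Function.update_self]; simp [hp]
      · rw [Function.update_of_ne ht, hdiag]; simp [ht]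
    have hf2 : (Finset.univ.filter fun t => rel (x t) (Function.update x s w t) = 2) = ∅ := by
      ext t
      simp only [Finset.mem_filter, Finset.mem_univ, true_and, Finset.notMem_empty, iff_false]
      by_cases ht : t = s
      · subst ht; rw [Function.update_self, hp]; norm_num
      · rw [Function.update_of_ne ht, hdiag]; norm_num
    rw [hf1, hf2]
    simp
  · rintro ⟨s, w⟩ hp ⟨s', w'⟩ hp' h
    simp only [Finset.mem_filter, Finset.mem_univ, true_and] at hp hp'
    have h' : Function.update x s w = Function.update x s' w' := h
    by_cases hss : s = s'
    · subst hss
      have hw : w = w' := by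
        have := congrFun h' s
        rwa [Function.update_self, Function.update_self] at this
      rw [hw]
    · exfalso
      have hx2 : w = x s := by
        have := congrFun h' s
        rwa [Function.update_self, Function.update_of_ne (fun hh => hss hh)] at this
      rw [hx2, hdiag] at hp
      omega
  · intro z hz
    simp only [Finset.mem_filter, Finset.mem_univ, true_and] at hz
    obtain ⟨h1, h2⟩ := hz
    have h1' : (Finset.univ.filter fun s => rel (x s) (z s) = 1).card = 1 := by exact_mod_cast h1
    have h2' : (Finset.univ.filter fun s => rel (x s) (z s) = 2) = ∅ :=
      Finset.card_eq_zero.mp (by exact_mod_cast h2)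
    obtain ⟨s, hs⟩ := Finset.card_eq_one.mp h1'
    have hs1 : rel (x s) (z s) = 1 := by
      have hmem : s ∈ (Finset.univ.filter fun s => rel (x s) (z s) = 1) := by
        rw [hs]; exact Finset.mem_singleton_self s
      simpa using hmem
    refine ⟨(s, z s), by simpa using hs1, ?_⟩
    show Function.update x s (z s) = z
    funext t
    by_cases ht : t = s
    · subst ht; rw [Function.update_self]
    · rw [Function.update_of_ne ht]
      rcases hcases (x t) (z t) with h|h|h
      · exact hzero _ _ h
      · exfalso
        have hmem : t ∈ (Finset.univ.filter fun s => rel (x s) (z s) = 1) := by simp [h]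
        rw [hs] at hmem
        exact ht (Finset.mem_singleton.mp hmem)
      · exfalso
        have hmem : t ∈ (Finset.univ.filter fun s => rel (x s) (z s) = 2) := by simp [h]
        rw [h2'] at hmem
        exact absurd hmem (Finset.notMem_empty t)
  · rintro ⟨s, w⟩ hp
    rfl

section basics
variable {V : Type*} [Fintype V] [DecidableEq V] (A₀ A₁ A₂ : Matrix V V ℝ)
variable (h₁01 : ∀ x y, A₁ x y = 0 ∨ A₁ x y = 1) (h₂01 : ∀ x y, A₂ x y = 0 ∨ A₂ x y = 1)
variable (h0 : A₀ = 1) (hsum : A₀ + A₁ + A₂ = Matrix.of fun _ _ => (1 : ℝ))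

include h0 hsum in
lemma hs_entry : ∀ u w : V, (if u = w then (1:ℝ) else 0) + A₁ u w + A₂ u w = 1 := by
  intro u w
  have h := congrFun (congrFun hsum u) w
  rw [h0] at h
  simpa [Matrix.one_apply, Matrix.add_apply] using h

include h₁01 h₂01 h0 hsum in
lemma diag1 : ∀ u : V, A₁ u u = 0 := by
  intro u
  have h := hs_entry A₀ A₁ A₂ h0 hsum u u
  rcases h₁01 u u with h1|h1
  · exact h1
  · exfalso; rcases h₂01 u u with h2|h2 <;> rw [h1, h2, if_pos rfl] at h <;> linarith

include h₁01 h₂01 h0 hsum in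
lemma diag2 : ∀ u : V, A₂ u u = 0 := by
  intro u
  have h := hs_entry A₀ A₁ A₂ h0 hsum u u
  rcases h₂01 u u with h2|h2
  · exact h2
  · exfalso; rcases h₁01 u u with h1|h1 <;> rw [h1, h2, if_pos rfl] at h <;> linarith

include h₁01 h₂01 h0 hsum in
lemma rel_e1 : ∀ u w : V, A₁ u w = if relOf A₁ A₂ u w = 1 then 1 else 0 := by
  intro u w
  rcases h₁01 u w with h|h
  · rcases h₂01 u w with h2|h2 <;> simp [relOf, h, h2]
  · simp [relOf, h]

include h₁01 h₂01 h0 hsum in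
lemma rel_e2 : ∀ u w : V, A₂ u w = if relOf A₁ A₂ u w = 2 then 1 else 0 := by
  intro u w
  rcases h₁01 u w with h|h <;> simp only [relOf, h]
  · norm_num
    rcases h₂01 u w with h2|h2 <;> simp [h2]
  · norm_num
    have hne : u ≠ w := by
      intro he; subst he
      rw [diag1 A₀ A₁ A₂ h₁01 h₂01 h0 hsum u] at h; norm_num at h
    have hsw := hs_entry A₀ A₁ A₂ h0 hsum u w
    rw [if_neg hne, h] at hsw
    linarith

include h₁01 h₂01 h0 hsum in
lemma rel_zero_iff : ∀ u w : V, relOf A₁ A₂ u w = 0 ↔ u = w := by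
  intro u w
  constructor
  · intro h
    unfold relOf at h
    split_ifs at h with h1 h2
    rcases h₁01 u w with e1|e1
    · rcases h₂01 u w with e2|e2
      · have hsw := hs_entry A₀ A₁ A₂ h0 hsum u w
        rw [e1, e2] at hsw
        by_contra hne
        rw [if_neg hne] at hsw; linarith
      · exact absurd e2 h2
    · exact absurd e1 h1
  · rintro rfl
    unfold relOf
    rw [diag1 A₀ A₁ A₂ h₁01 h₂01 h0 hsum u, diag2 A₀ A₁ A₂ h₁01 h₂01 h0 hsum u]
    norm_num

include h₁01 h₂01 h0 hsum in
lemma rel_e0 : ∀ u w : V, (1 : Matrix V V ℝ) u w = if relOf A₁ A₂ u w = 0 then 1 else 0 := by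
  intro u w
  rw [Matrix.one_apply]
  by_cases h : u = w
  · rw [if_pos h, if_pos ((rel_zero_iff A₀ A₁ A₂ h₁01 h₂01 h0 hsum u w).2 h)]
  · rw [if_neg h, if_neg (fun hh => h ((rel_zero_iff A₀ A₁ A₂ h₁01 h₂01 h0 hsum u w).1 hh))]

include h₁01 h₂01 h0 hsum in
lemma relA1_iff : ∀ u w : V, A₁ u w = 1 ↔ relOf A₁ A₂ u w = 1 := by
  intro u w
  rw [rel_e1 A₀ A₁ A₂ h₁01 h₂01 h0 hsum u w]
  split_ifs with h <;> simp [h]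

include h₁01 h₂01 h0 hsum in
lemma relA2_iff : ∀ u w : V, A₂ u w = 1 ↔ relOf A₁ A₂ u w = 2 := by
  intro u w
  rw [rel_e2 A₀ A₁ A₂ h₁01 h₂01 h0 hsum u w]
  split_ifs with h <;> simp [h]

end basics

section keys
variable {V : Type*} [Fintype V] [DecidableEq V] (A₀ A₁ A₂ : Matrix V V ℝ)
variable (k b c : ℝ)
variable (e0 : ∀ u w : V, (1 : Matrix V V ℝ) u w = if relOf A₁ A₂ u w = 0 then 1 else 0)
variable (e1 : ∀ u w : V, A₁ u w = if relOf A₁ A₂ u w = 1 then 1 else 0)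
variable (e2 : ∀ u w : V, A₂ u w = if relOf A₁ A₂ u w = 2 then 1 else 0)
variable (hA₁sq : A₁ * A₁ = k • A₀ + (k - 1 - b) • A₁ + c • A₂)
variable (hA₁₂ : A₁ * A₂ = b • A₁ + (k - c) • A₂)
variable (h0 : A₀ = 1)

include e1 in
lemma key0 : ∀ u v : V, ∑ w, A₁ u w * (1 : Matrix V V ℝ) w v = pval k b c (relOf A₁ A₂ u v) 0 := by
  intro u v
  rw [← Matrix.mul_apply, Matrix.mul_one, e1]
  rcases relOf_cases A₁ A₂ u v with h|h|h <;> simp [h, pval]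

include e0 e1 e2 hA₁sq h0 in
lemma key1 : ∀ u v : V, ∑ w, A₁ u w * A₁ w v = pval k b c (relOf A₁ A₂ u v) 1 := by
  intro u v
  rw [← Matrix.mul_apply, hA₁sq, h0]
  simp only [Matrix.add_apply, Matrix.smul_apply, smul_eq_mul]
  rw [e0, e1, e2]
  rcases relOf_cases A₁ A₂ u v with h|h|h <;> simp [h, pval]

include e0 e1 e2 hA₁₂ in
lemma key2 : ∀ u v : V, ∑ w, A₁ u w * A₂ w v = pval k b c (relOf A₁ A₂ u v) 2 := by
  intro u v
  rw [← Matrix.mul_apply, hA₁₂]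
  simp only [Matrix.add_apply, Matrix.smul_apply, smul_eq_mul]
  rw [e1, e2]
  rcases relOf_cases A₁ A₂ u v with h|h|h <;> simp [h, pval]

include e0 e1 e2 hA₁sq hA₁₂ h0 in
lemma triple_sum : ∀ (u v : V) (c0 c1 c2 : ℝ),
    ∑ w, A₁ u w * (c0 * (1 : Matrix V V ℝ) w v + c1 * A₁ w v + c2 * A₂ w v)
      = c0 * pval k b c (relOf A₁ A₂ u v) 0 + c1 * pval k b c (relOf A₁ A₂ u v) 1
        + c2 * pval k b c (relOf A₁ A₂ u v) 2 := by
  intro u v c0 c1 c2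
  rw [← key0 A₁ A₂ k b c e1 u v, ← key1 A₀ A₁ A₂ k b c e0 e1 e2 hA₁sq h0 u v,
    ← key2 A₁ A₂ k b c e0 e1 e2 hA₁₂ u v, Finset.mul_sum, Finset.mul_sum, Finset.mul_sum,
    ← Finset.sum_add_distrib, ← Finset.sum_add_distrib]
  exact Finset.sum_congr rfl fun w _ => by ring

end keys

end SymHelpers

/-- recurrence relation for A₁₀·A_{ij} in the symmetrization of a
two-class association scheme. -/
theorem symmetrization_recurrence_A10
    {V : Type*} [Fintype V] [DecidableEq V]
    (A₀ A₁ A₂ : Matrix V V ℝ)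
    -- two-class symmetric association scheme axioms
    (h₁ne : A₁ ≠ 0) (h₂ne : A₂ ≠ 0)
    (h₁01 : ∀ x y, A₁ x y = 0 ∨ A₁ x y = 1) (h₂01 : ∀ x y, A₂ x y = 0 ∨ A₂ x y = 1)
    (h0 : A₀ = 1) (hsum : A₀ + A₁ + A₂ = Matrix.of fun _ _ => (1 : ℝ))
    (h₁symm : A₁ᵀ = A₁) (h₂symm : A₂ᵀ = A₂)
    -- parameters k, b, c of the scheme
    (k b c : ℝ) (hc : c ≠ 0)
    (hA₁sq : A₁ * A₁ = k • A₀ + (k - 1 - b) • A₁ + c • A₂)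
    (hA₁₂ : A₁ * A₂ = b • A₁ + (k - c) • A₂)
    (hA₂₁ : A₂ * A₁ = b • A₁ + (k - c) • A₂)
    (hA₂sq : A₂ * A₂ =
      (b * k / c) • A₀ + (b * k / c - b) • A₁ + (b * k / c - 1 - k + c) • A₂)
    (N : ℕ) (hN : 1 ≤ N) :
    ∀ i j : ℕ, i + j ≤ N →
      symA A₁ A₂ N 1 0 * symA A₁ A₂ N i j =
        (k * ((N : ℝ) - i - j + 1)) • symA A₁ A₂ N ((i : ℤ) - 1) j +
        ((i : ℝ) * (k - 1 - b) + (j : ℝ) * (k - c)) • symA A₁ A₂ N i j +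
        ((i : ℝ) + 1) • symA A₁ A₂ N ((i : ℤ) + 1) j +
        (c * ((j : ℝ) + 1)) • symA A₁ A₂ N ((i : ℤ) - 1) ((j : ℤ) + 1) +
        (b * ((i : ℝ) + 1)) • symA A₁ A₂ N ((i : ℤ) + 1) ((j : ℤ) - 1) := by
  intro i j hij
  have e0' := rel_e0 A₀ A₁ A₂ h₁01 h₂01 h0 hsum
  have e1' := rel_e1 A₀ A₁ A₂ h₁01 h₂01 h0 hsum
  have e2' := rel_e2 A₀ A₁ A₂ h₁01 h₂01 h0 hsum
  have hzero : ∀ u w : V, relOf A₁ A₂ u w = 0 → u = w :=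
    fun u w h => (rel_zero_iff A₀ A₁ A₂ h₁01 h₂01 h0 hsum u w).1 h
  have hdiag : ∀ u : V, relOf A₁ A₂ u u = 0 :=
    fun u => (rel_zero_iff A₀ A₁ A₂ h₁01 h₂01 h0 hsum u u).2 rfl
  have hsymA : ∀ (a b' : ℤ) (x y : Fin N → V), symA A₁ A₂ N a b' x y =
      if (((Finset.univ.filter fun s => relOf A₁ A₂ (x s) (y s) = 1).card : ℤ) = a ∧
          ((Finset.univ.filter fun s => relOf A₁ A₂ (x s) (y s) = 2).card : ℤ) = b')
        then 1 else 0 := by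
    intro a b' x y
    have f1 : (Finset.univ.filter fun s => A₁ (x s) (y s) = 1)
        = Finset.univ.filter fun s => relOf A₁ A₂ (x s) (y s) = 1 :=
      Finset.filter_congr fun s _ => relA1_iff A₀ A₁ A₂ h₁01 h₂01 h0 hsum (x s) (y s)
    have f2 : (Finset.univ.filter fun s => A₂ (x s) (y s) = 1)
        = Finset.univ.filter fun s => relOf A₁ A₂ (x s) (y s) = 2 :=
      Finset.filter_congr fun s _ => relA2_iff A₀ A₁ A₂ h₁01 h₂01 h0 hsum (x s) (y s)
    simp only [symA, Matrix.of_apply]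
    rw [f1, f2]
  have hcard : ∀ x y : Fin N → V,
      (Finset.univ.filter fun s => relOf A₁ A₂ (x s) (y s) = 0).card
        + (Finset.univ.filter fun s => relOf A₁ A₂ (x s) (y s) = 1).card
        + (Finset.univ.filter fun s => relOf A₁ A₂ (x s) (y s) = 2).card = N := by
    intro x y
    have hone : ∀ s : Fin N, (((if relOf A₁ A₂ (x s) (y s) = 0 then 1 else 0)
        + (if relOf A₁ A₂ (x s) (y s) = 1 then 1 else 0))
        + (if relOf A₁ A₂ (x s) (y s) = 2 then 1 else 0) : ℕ) = 1 := by
      intro s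
      rcases relOf_cases A₁ A₂ (x s) (y s) with h|h|h <;> simp [h]
    calc (Finset.univ.filter fun s => relOf A₁ A₂ (x s) (y s) = 0).card
        + (Finset.univ.filter fun s => relOf A₁ A₂ (x s) (y s) = 1).card
        + (Finset.univ.filter fun s => relOf A₁ A₂ (x s) (y s) = 2).card
        = ∑ s : Fin N, (((if relOf A₁ A₂ (x s) (y s) = 0 then 1 else 0)
            + (if relOf A₁ A₂ (x s) (y s) = 1 then 1 else 0))
            + (if relOf A₁ A₂ (x s) (y s) = 2 then 1 else 0) : ℕ) := by
          rw [Finset.card_filter, Finset.card_filter, Finset.card_filter,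
            ← Finset.sum_add_distrib, ← Finset.sum_add_distrib]
      _ = ∑ _s : Fin N, 1 := Finset.sum_congr rfl fun s _ => hone s
      _ = N := by simp
  ext x y
  rw [Matrix.mul_apply]
  simp only [Matrix.add_apply, Matrix.smul_apply, smul_eq_mul, hsymA]
  rw [bij_step (relOf A₁ A₂) hdiag hzero (relOf_cases A₁ A₂) x
    (fun z => if (((Finset.univ.filter fun s => relOf A₁ A₂ (z s) (y s) = 1).card : ℤ) = (i:ℤ) ∧
        ((Finset.univ.filter fun s => relOf A₁ A₂ (z s) (y s) = 2).card : ℤ) = (j:ℤ))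
      then (1:ℝ) else 0)]
  rw [Fintype.sum_prod_type]
  have hinner : ∀ s : Fin N,
      (∑ w : V, (if relOf A₁ A₂ (x s) w = 1 then (1:ℝ) else 0) *
        (if (((Finset.univ.filter fun t =>
                relOf A₁ A₂ (Function.update x s w t) (y t) = 1).card : ℤ) = (i:ℤ) ∧
            ((Finset.univ.filter fun t =>
                relOf A₁ A₂ (Function.update x s w t) (y t) = 2).card : ℤ) = (j:ℤ))
          then (1:ℝ) else 0))
      = Gdef k b c ((Finset.univ.filter fun s => relOf A₁ A₂ (x s) (y s) = 1).card)
          ((Finset.univ.filter fun s => relOf A₁ A₂ (x s) (y s) = 2).card) i j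
          (relOf A₁ A₂ (x s) (y s)) := by
    intro s
    have hptw : ∀ w : V,
        (if relOf A₁ A₂ (x s) w = 1 then (1:ℝ) else 0) *
          (if (((Finset.univ.filter fun t =>
                  relOf A₁ A₂ (Function.update x s w t) (y t) = 1).card : ℤ) = (i:ℤ) ∧
              ((Finset.univ.filter fun t =>
                  relOf A₁ A₂ (Function.update x s w t) (y t) = 2).card : ℤ) = (j:ℤ))
            then (1:ℝ) else 0)
        = A₁ (x s) w *
          ((if ((((Finset.univ.filter fun t => relOf A₁ A₂ (x t) (y t) = 1).card : ℤ)
                - (if relOf A₁ A₂ (x s) (y s) = 1 then 1 else 0) = (i:ℤ)) ∧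
               (((Finset.univ.filter fun t => relOf A₁ A₂ (x t) (y t) = 2).card : ℤ)
                - (if relOf A₁ A₂ (x s) (y s) = 2 then 1 else 0) = (j:ℤ)))
             then (1:ℝ) else 0) * (1 : Matrix V V ℝ) w (y s)
          + (if ((((Finset.univ.filter fun t => relOf A₁ A₂ (x t) (y t) = 1).card : ℤ)
                - (if relOf A₁ A₂ (x s) (y s) = 1 then 1 else 0) + 1 = (i:ℤ)) ∧
               (((Finset.univ.filter fun t => relOf A₁ A₂ (x t) (y t) = 2).card : ℤ)
                - (if relOf A₁ A₂ (x s) (y s) = 2 then 1 else 0) = (j:ℤ)))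
             then (1:ℝ) else 0) * A₁ w (y s)
          + (if ((((Finset.univ.filter fun t => relOf A₁ A₂ (x t) (y t) = 1).card : ℤ)
                - (if relOf A₁ A₂ (x s) (y s) = 1 then 1 else 0) = (i:ℤ)) ∧
               (((Finset.univ.filter fun t => relOf A₁ A₂ (x t) (y t) = 2).card : ℤ)
                - (if relOf A₁ A₂ (x s) (y s) = 2 then 1 else 0) + 1 = (j:ℤ)))
             then (1:ℝ) else 0) * A₂ w (y s)) := by
      intro w
      rw [cnt_update (relOf A₁ A₂) x y s w 1, cnt_update (relOf A₁ A₂) x y s w 2,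
        e1' (x s) w, e0' w (y s), e1' w (y s), e2' w (y s)]
      rcases relOf_cases A₁ A₂ w (y s) with h|h|h <;> simp [h]
    rw [Finset.sum_congr rfl fun w _ => hptw w,
      triple_sum A₀ A₁ A₂ k b c e0' e1' e2' hA₁sq hA₁₂ h0 (x s) (y s)]
    simp only [Gdef]
  rw [Finset.sum_congr rfl fun s _ => hinner s]
  have houter : (∑ s : Fin N,
      Gdef k b c ((Finset.univ.filter fun s => relOf A₁ A₂ (x s) (y s) = 1).card)
        ((Finset.univ.filter fun s => relOf A₁ A₂ (x s) (y s) = 2).card) i j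
        (relOf A₁ A₂ (x s) (y s)))
      = ((Finset.univ.filter fun s => relOf A₁ A₂ (x s) (y s) = 0).card : ℝ) *
          Gdef k b c ((Finset.univ.filter fun s => relOf A₁ A₂ (x s) (y s) = 1).card)
            ((Finset.univ.filter fun s => relOf A₁ A₂ (x s) (y s) = 2).card) i j 0
        + ((Finset.univ.filter fun s => relOf A₁ A₂ (x s) (y s) = 1).card : ℝ) *
          Gdef k b c ((Finset.univ.filter fun s => relOf A₁ A₂ (x s) (y s) = 1).card)
            ((Finset.univ.filter fun s => relOf A₁ A₂ (x s) (y s) = 2).card) i j 1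
        + ((Finset.univ.filter fun s => relOf A₁ A₂ (x s) (y s) = 2).card : ℝ) *
          Gdef k b c ((Finset.univ.filter fun s => relOf A₁ A₂ (x s) (y s) = 1).card)
            ((Finset.univ.filter fun s => relOf A₁ A₂ (x s) (y s) = 2).card) i j 2 := by
    have hpt : ∀ s : Fin N,
        Gdef k b c ((Finset.univ.filter fun s => relOf A₁ A₂ (x s) (y s) = 1).card)
          ((Finset.univ.filter fun s => relOf A₁ A₂ (x s) (y s) = 2).card) i j
          (relOf A₁ A₂ (x s) (y s))
        = ((if relOf A₁ A₂ (x s) (y s) = 0 then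
              Gdef k b c ((Finset.univ.filter fun s => relOf A₁ A₂ (x s) (y s) = 1).card)
                ((Finset.univ.filter fun s => relOf A₁ A₂ (x s) (y s) = 2).card) i j 0 else 0)
          + (if relOf A₁ A₂ (x s) (y s) = 1 then
              Gdef k b c ((Finset.univ.filter fun s => relOf A₁ A₂ (x s) (y s) = 1).card)
                ((Finset.univ.filter fun s => relOf A₁ A₂ (x s) (y s) = 2).card) i j 1 else 0))
          + (if relOf A₁ A₂ (x s) (y s) = 2 then
              Gdef k b c ((Finset.univ.filter fun s => relOf A₁ A₂ (x s) (y s) = 1).card)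
                ((Finset.univ.filter fun s => relOf A₁ A₂ (x s) (y s) = 2).card) i j 2 else 0) := by
      intro s
      rcases relOf_cases A₁ A₂ (x s) (y s) with h|h|h <;> rw [h] <;> norm_num
    rw [Finset.sum_congr rfl fun s _ => hpt s, Finset.sum_add_distrib, Finset.sum_add_distrib,
      ← Finset.sum_filter, ← Finset.sum_filter, ← Finset.sum_filter,
      Finset.sum_const, Finset.sum_const, Finset.sum_const]
    simp [nsmul_eq_mul]
  rw [houter]
  have hc0 : ((Finset.univ.filter fun s => relOf A₁ A₂ (x s) (y s) = 0).card : ℝ)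
      = (N:ℝ) - ((Finset.univ.filter fun s => relOf A₁ A₂ (x s) (y s) = 1).card : ℝ)
        - ((Finset.univ.filter fun s => relOf A₁ A₂ (x s) (y s) = 2).card : ℝ) := by
    have h := hcard x y
    have h' : ((Finset.univ.filter fun s => relOf A₁ A₂ (x s) (y s) = 0).card : ℝ)
        + ((Finset.univ.filter fun s => relOf A₁ A₂ (x s) (y s) = 1).card : ℝ)
        + ((Finset.univ.filter fun s => relOf A₁ A₂ (x s) (y s) = 2).card : ℝ) = N := by
      exact_mod_cast h
    linarith
  rw [hc0]
  exact scalar_key k b c N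
    ((Finset.univ.filter fun s => relOf A₁ A₂ (x s) (y s) = 1).card)
    ((Finset.univ.filter fun s => relOf A₁ A₂ (x s) (y s) = 2).card) i j
end
end

section
/- Let A_0, A_1, A_2 be a symmetric association scheme with two classes on a vertex set V of size v, with parameters k, b, c (c ≠ 0) such that A_1² = k A_0 + (k−1−b) A_1 + c A_2, A_1 A_2 = b A_1 + (k−c) A_2, and A_2² = (bk/c) A_0 + (bk/c − b) A_1 + (bk/c − 1 − k + c) A_2. For N ≥ 1 and i,j ≥ 0 with i+j ≤ N, let A_{ij} be the symmetrized matrices indexed by V^N defined by (A_{ij})_{x,y} = 1 if |{s : (A_1)_{x_s,y_s} = 1}| = i and |{s : (A_2)_{x_s,y_s} = 1}| = j, and 0 otherwise (with the convention A_{mn} = 0 when m < 0, n < 0 or m+n > N). Then A_{01} A_{ij} = (bk/c)(N−i−j+1) A_{i,j−1} + (b i + j(bk/c − 1 − k + c)) A_{ij} + (j+1) A_{i,j+1} + (j+1)(k−c) A_{i−1,j+1} + (i+1)(bk/c − b) A_{i+1,j−1}. -/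
open Matrix Finset
open scoped Classical

noncomputable section

lemma card_filter_update' {V : Type*} [Fintype V] [DecidableEq V] {N : ℕ}
    (p : Fin N → V → Prop) (x : Fin N → V) (s : Fin N) (w : V) :
    (((Finset.univ.filter fun t => p t (Function.update x s w t)).card : ℤ)) =
      ((Finset.univ.filter fun t => p t (x t)).card : ℤ)
      - (if p s (x s) then 1 else 0) + (if p s w then 1 else 0) := by
  classical
  have herase : (Finset.univ.filter fun t => p t (Function.update x s w t)).erase s
      = (Finset.univ.filter fun t => p t (x t)).erase s := by
    ext t
    simp only [Finset.mem_erase, Finset.mem_filter, Finset.mem_univ, true_and]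
    constructor
    · rintro ⟨h, h'⟩; exact ⟨h, by rwa [Function.update_of_ne h] at h'⟩
    · rintro ⟨h, h'⟩; exact ⟨h, by rwa [Function.update_of_ne h]⟩
  have key : ∀ (F : Finset (Fin N)) (c : Prop) [Decidable c], (s ∈ F ↔ c) →
      ((F.card : ℤ)) = ((F.erase s).card : ℤ) + (if c then 1 else 0) := by
    intro F c _ hmem
    by_cases hs : s ∈ F
    · rw [Finset.card_erase_of_mem hs, if_pos (hmem.mp hs)]
      have : 1 ≤ F.card := Finset.card_pos.mpr ⟨s, hs⟩
      push_cast [Nat.cast_sub this]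
      ring
    · rw [Finset.erase_eq_of_notMem hs, if_neg (fun hc => hs (hmem.mpr hc))]
      ring
  have k1 := key (Finset.univ.filter fun t => p t (Function.update x s w t)) (p s w)
    (by simp)
  have k2 := key (Finset.univ.filter fun t => p t (x t)) (p s (x s)) (by simp)
  rw [k1, k2, herase]
  ring


/-- recurrence relation for A₀₁·A_{ij} in the symmetrization of a
two-class association scheme. -/
theorem symmetrization_recurrence_A01
    {V : Type*} [Fintype V] [DecidableEq V]
    (A₀ A₁ A₂ : Matrix V V ℝ)
    -- two-class symmetric association scheme axioms
    (h₁ne : A₁ ≠ 0) (h₂ne : A₂ ≠ 0)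
    (h₁01 : ∀ x y, A₁ x y = 0 ∨ A₁ x y = 1) (h₂01 : ∀ x y, A₂ x y = 0 ∨ A₂ x y = 1)
    (h0 : A₀ = 1) (hsum : A₀ + A₁ + A₂ = Matrix.of fun _ _ => (1 : ℝ))
    (h₁symm : A₁ᵀ = A₁) (h₂symm : A₂ᵀ = A₂)
    -- parameters k, b, c of the scheme
    (k b c : ℝ) (hc : c ≠ 0)
    (hA₁sq : A₁ * A₁ = k • A₀ + (k - 1 - b) • A₁ + c • A₂)
    (hA₁₂ : A₁ * A₂ = b • A₁ + (k - c) • A₂)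
    (hA₂₁ : A₂ * A₁ = b • A₁ + (k - c) • A₂)
    (hA₂sq : A₂ * A₂ =
      (b * k / c) • A₀ + (b * k / c - b) • A₁ + (b * k / c - 1 - k + c) • A₂)
    (N : ℕ) (hN : 1 ≤ N) :
    ∀ i j : ℕ, i + j ≤ N →
      symA A₁ A₂ N 0 1 * symA A₁ A₂ N i j =
        (b * k / c * ((N : ℝ) - i - j + 1)) • symA A₁ A₂ N i ((j : ℤ) - 1) +
        (b * (i : ℝ) + (j : ℝ) * (b * k / c - 1 - k + c)) • symA A₁ A₂ N i j +
        ((j : ℝ) + 1) • symA A₁ A₂ N i ((j : ℤ) + 1) +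
        (((j : ℝ) + 1) * (k - c)) • symA A₁ A₂ N ((i : ℤ) - 1) ((j : ℤ) + 1) +
        (((i : ℝ) + 1) * (b * k / c - b)) • symA A₁ A₂ N ((i : ℤ) + 1) ((j : ℤ) - 1) := by
  -- basic structure facts
  have hsum' : ∀ u w : V, A₁ u w + A₂ u w = (if u = w then 0 else 1) := by
    intro u w
    have h := congrFun (congrFun hsum u) w
    rw [h0] at h
    simp only [Matrix.add_apply, Matrix.one_apply, Matrix.of_apply] at h
    split_ifs at h ⊢ <;> linarith
  have hd1 : ∀ u, A₁ u u = 0 := by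
    intro u
    have h := hsum' u u
    rcases h₁01 u u with h1|h1 <;> rcases h₂01 u u with h2|h2 <;>
      simp [h1, h2] at h ⊢ <;> linarith
  have hd2 : ∀ u, A₂ u u = 0 := by
    intro u
    have h := hsum' u u
    rcases h₁01 u u with h1|h1 <;> rcases h₂01 u u with h2|h2 <;>
      simp [h1, h2] at h ⊢ <;> linarith
  have hne2 : ∀ u w, A₂ u w = 1 → u ≠ w := by
    intro u w h hw; subst hw; rw [hd2 u] at h; norm_num at h
  have hne1 : ∀ u w, A₁ u w = 1 → u ≠ w := by
    intro u w h hw; subst hw; rw [hd1 u] at h; norm_num at h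
  have h21 : ∀ u w, A₂ u w = 1 → A₁ u w = 0 := by
    intro u w h
    have h' := hsum' u w; rw [if_neg (hne2 u w h)] at h'; linarith
  have h12 : ∀ u w, A₁ u w = 1 → A₂ u w = 0 := by
    intro u w h
    have h' := hsum' u w; rw [if_neg (hne1 u w h)] at h'; linarith
  have heq0 : ∀ u w, A₁ u w = 0 → A₂ u w = 0 → u = w := by
    intro u w h1 h2
    by_contra hne
    have h' := hsum' u w; rw [if_neg hne, h1, h2] at h'; norm_num at h'
  have hA21e : ∀ u w : V, ∑ z, A₂ u z * A₁ z w = b * A₁ u w + (k - c) * A₂ u w := by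
    intro u w
    have h := congrFun (congrFun hA₂₁ u) w
    simpa [Matrix.mul_apply, Matrix.add_apply, Matrix.smul_apply, smul_eq_mul] using h
  have hA22e : ∀ u w : V, ∑ z, A₂ u z * A₂ z w =
      (b*k/c) * (if u = w then 1 else 0) + (b*k/c - b) * A₁ u w
        + (b*k/c - 1 - k + c) * A₂ u w := by
    intro u w
    have h := congrFun (congrFun hA₂sq u) w
    rw [h0] at h
    simpa [Matrix.mul_apply, Matrix.add_apply, Matrix.smul_apply, Matrix.one_apply,
      smul_eq_mul] using h
  intro i j hij
  ext x y
  simp only [Matrix.mul_apply, Matrix.add_apply, Matrix.smul_apply, smul_eq_mul, symA,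
    Matrix.of_apply]
  set I := (Finset.univ.filter fun s => A₁ (x s) (y s) = 1).card with hIdef
  set J := (Finset.univ.filter fun s => A₂ (x s) (y s) = 1).card with hJdef
  -- local abbreviations
  set e₁ : Fin N → ℤ := fun s => if A₁ (x s) (y s) = 1 then 1 else 0 with he₁
  set e₂ : Fin N → ℤ := fun s => if A₂ (x s) (y s) = 1 then 1 else 0 with he₂
  set C0 : Fin N → ℝ := fun s =>
    if ((I:ℤ) - e₁ s = (i:ℤ) ∧ (J:ℤ) - e₂ s = (j:ℤ)) then 1 else 0 with hC0
  set C1 : Fin N → ℝ := fun s =>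
    if ((I:ℤ) - e₁ s + 1 = (i:ℤ) ∧ (J:ℤ) - e₂ s = (j:ℤ)) then 1 else 0 with hC1
  set C2 : Fin N → ℝ := fun s =>
    if ((I:ℤ) - e₁ s = (i:ℤ) ∧ (J:ℤ) - e₂ s + 1 = (j:ℤ)) then 1 else 0 with hC2
  -- image decomposition of the z-sum
  have himg : (Finset.univ.filter (fun z : Fin N → V =>
        ((Finset.univ.filter fun s => A₁ (x s) (z s) = 1).card : ℤ) = 0 ∧
        ((Finset.univ.filter fun s => A₂ (x s) (z s) = 1).card : ℤ) = 1))
      = (Finset.univ.filter (fun p : Fin N × V => A₂ (x p.1) p.2 = 1)).image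
          (fun p => Function.update x p.1 p.2) := by
    ext z
    simp only [Finset.mem_filter, Finset.mem_univ, true_and, Finset.mem_image, Prod.exists]
    constructor
    · rintro ⟨hz1, hz2⟩
      have hz1' : (Finset.univ.filter fun s => A₁ (x s) (z s) = 1) = ∅ := by
        rw [← Finset.card_eq_zero]; exact_mod_cast hz1
      have hz2' : ∃ s, (Finset.univ.filter fun s => A₂ (x s) (z s) = 1) = {s} := by
        rw [← Finset.card_eq_one]; exact_mod_cast hz2
      obtain ⟨s, hs⟩ := hz2'
      have hsmem : A₂ (x s) (z s) = 1 := by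
        have hm : s ∈ (Finset.univ.filter fun s => A₂ (x s) (z s) = 1) := by
          rw [hs]; exact Finset.mem_singleton_self s
        simpa using hm
      refine ⟨s, z s, hsmem, ?_⟩
      funext t
      by_cases ht : t = s
      · subst ht; simp
      · rw [Function.update_of_ne ht]
        have h1 : A₁ (x t) (z t) = 0 := by
          rcases h₁01 (x t) (z t) with h|h
          · exact h
          · exfalso
            have hm : t ∈ (Finset.univ.filter fun s => A₁ (x s) (z s) = 1) := by simp [h]
            rw [hz1'] at hm; simp at hm
        have h2 : A₂ (x t) (z t) = 0 := by
          rcases h₂01 (x t) (z t) with h|h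
          · exact h
          · exfalso
            have hm : t ∈ (Finset.univ.filter fun s => A₂ (x s) (z s) = 1) := by simp [h]
            rw [hs] at hm; exact ht (Finset.mem_singleton.mp hm)
        exact heq0 _ _ h1 h2
    · rintro ⟨s, w, hw, rfl⟩
      constructor
      · norm_cast
        rw [Finset.card_eq_zero, Finset.filter_eq_empty_iff]
        intro t _
        by_cases ht : t = s
        · subst ht; rw [Function.update_self, h21 _ _ hw]; norm_num
        · rw [Function.update_of_ne ht, hd1]; norm_num
      · norm_cast
        rw [Finset.card_eq_one]
        refine ⟨s, ?_⟩
        ext t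
        simp only [Finset.mem_filter, Finset.mem_univ, true_and, Finset.mem_singleton]
        by_cases ht : t = s
        · subst ht; rw [Function.update_self]; simp [hw]
        · rw [Function.update_of_ne ht, hd2]; simp [ht]
  have hinj : ∀ p ∈ (Finset.univ.filter (fun p : Fin N × V => A₂ (x p.1) p.2 = 1)),
      ∀ q ∈ (Finset.univ.filter (fun p : Fin N × V => A₂ (x p.1) p.2 = 1)),
      Function.update x p.1 p.2 = Function.update x q.1 q.2 → p = q := by
    rintro ⟨s, w⟩ hp ⟨s', w'⟩ hq h
    simp only [Finset.mem_filter, Finset.mem_univ, true_and] at hp hq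
    by_cases hss : s = s'
    · subst hss
      have hww := congrFun h s
      simp only [Function.update_self] at hww
      simp [hww]
    · exfalso
      have h1 := congrFun h s
      rw [Function.update_self, Function.update_of_ne hss] at h1
      exact hne2 _ _ hp h1.symm
  -- pointwise decomposition of the updated profile indicator
  have hpoint : ∀ (s : Fin N) (w : V),
      (if (((Finset.univ.filter fun t => A₁ (Function.update x s w t) (y t) = 1).card : ℤ) = (i:ℤ) ∧
           ((Finset.univ.filter fun t => A₂ (Function.update x s w t) (y t) = 1).card : ℤ) = (j:ℤ))
        then (1:ℝ) else 0)
      = C0 s * (if w = y s then 1 else 0) + C1 s * A₁ w (y s) + C2 s * A₂ w (y s) := by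
    intro s w
    rw [card_filter_update' (fun t v => A₁ v (y t) = 1) x s w,
        card_filter_update' (fun t v => A₂ v (y t) = 1) x s w,
        ← hIdef, ← hJdef]
    simp only [hC0, hC1, hC2, he₁, he₂]
    by_cases hw : w = y s
    · subst hw
      simp [hd1, hd2]
    · rcases h₁01 w (y s) with h1|h1
      · rcases h₂01 w (y s) with h2|h2
        · exact absurd (heq0 _ _ h1 h2) hw
        · simp [h1, h2, hw]
      · have h2 := h12 _ _ h1
        simp [h1, h2, hw]
  have hswitch : ∀ (u w : V) (t : ℝ), (if A₂ u w = 1 then t else 0) = A₂ u w * t := by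
    intro u w t
    rcases h₂01 u w with h|h <;> simp [h]
  have hinner : ∀ (u v' : V) (c0 c1 c2 : ℝ),
      (∑ w : V, A₂ u w * (c0 * (if w = v' then 1 else 0) + c1 * A₁ w v' + c2 * A₂ w v'))
      = c0 * A₂ u v' + c1 * (b * A₁ u v' + (k - c) * A₂ u v')
        + c2 * ((b*k/c) * (if u = v' then 1 else 0) + (b*k/c - b) * A₁ u v'
          + (b*k/c - 1 - k + c) * A₂ u v') := by
    intro u v' c0 c1 c2
    have e0 : (∑ w : V, A₂ u w * (if w = v' then 1 else 0)) = A₂ u v' := by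
      simp [mul_ite]
    have ee1 := hA21e u v'
    have ee2 := hA22e u v'
    calc (∑ w : V, A₂ u w * (c0 * (if w = v' then 1 else 0) + c1 * A₁ w v' + c2 * A₂ w v'))
        = c0 * (∑ w : V, A₂ u w * (if w = v' then 1 else 0))
          + c1 * (∑ w : V, A₂ u w * A₁ w v') + c2 * (∑ w : V, A₂ u w * A₂ w v') := by
          rw [Finset.mul_sum, Finset.mul_sum, Finset.mul_sum, ← Finset.sum_add_distrib,
            ← Finset.sum_add_distrib]
          exact Finset.sum_congr rfl (fun w _ => by ring)
      _ = _ := by rw [e0, ee1, ee2]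
  simp only [ite_mul, one_mul, zero_mul]
  rw [← Finset.sum_filter]
  rw [himg, Finset.sum_image hinj]
  rw [Finset.sum_filter, Fintype.sum_prod_type]
  simp only [hswitch, hpoint, hinner]
  rw [← Finset.sum_filter_add_sum_filter_not Finset.univ (fun s => A₁ (x s) (y s) = 1),
      ← Finset.sum_filter_add_sum_filter_not
        (Finset.univ.filter (fun s => ¬ A₁ (x s) (y s) = 1)) (fun s => A₂ (x s) (y s) = 1)]
  have hclass1 : ∀ s ∈ Finset.univ.filter (fun s => A₁ (x s) (y s) = 1),
      C0 s * A₂ (x s) (y s) + C1 s * (b * A₁ (x s) (y s) + (k - c) * A₂ (x s) (y s)) +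
        C2 s * ((b * k / c * if x s = y s then 1 else 0) + (b * k / c - b) * A₁ (x s) (y s)
          + (b * k / c - 1 - k + c) * A₂ (x s) (y s))
      = b * (if ((I:ℤ) = (i:ℤ) ∧ (J:ℤ) = (j:ℤ)) then 1 else 0)
        + (b * k / c - b) * (if ((I:ℤ) = (i:ℤ) + 1 ∧ (J:ℤ) = (j:ℤ) - 1) then 1 else 0) := by
    intro s hs
    simp only [Finset.mem_filter] at hs
    have h1 := hs.2
    have h2 := h12 _ _ h1
    have hxy := hne1 _ _ h1
    simp only [hC0, hC1, hC2, he₁, he₂, h1, h2, hxy, if_false, if_true]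
    norm_num
    split_ifs <;> first | (exfalso; omega) | ring | norm_num
  have hclass2 : ∀ s ∈ (Finset.univ.filter (fun s => ¬ A₁ (x s) (y s) = 1)).filter
      (fun s => A₂ (x s) (y s) = 1),
      C0 s * A₂ (x s) (y s) + C1 s * (b * A₁ (x s) (y s) + (k - c) * A₂ (x s) (y s)) +
        C2 s * ((b * k / c * if x s = y s then 1 else 0) + (b * k / c - b) * A₁ (x s) (y s)
          + (b * k / c - 1 - k + c) * A₂ (x s) (y s))
      = (if ((I:ℤ) = (i:ℤ) ∧ (J:ℤ) = (j:ℤ) + 1) then 1 else 0)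
        + (k - c) * (if ((I:ℤ) = (i:ℤ) - 1 ∧ (J:ℤ) = (j:ℤ) + 1) then 1 else 0)
        + (b * k / c - 1 - k + c) * (if ((I:ℤ) = (i:ℤ) ∧ (J:ℤ) = (j:ℤ)) then 1 else 0) := by
    intro s hs
    simp only [Finset.mem_filter] at hs
    have h2 := hs.2
    have h1 := h21 _ _ h2
    have hxy := hne2 _ _ h2
    simp only [hC0, hC1, hC2, he₁, he₂, h1, h2, hxy, if_false, if_true]
    norm_num
    split_ifs <;> first | (exfalso; omega) | ring | norm_num
  have hclass0 : ∀ s ∈ (Finset.univ.filter (fun s => ¬ A₁ (x s) (y s) = 1)).filter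
      (fun s => ¬ A₂ (x s) (y s) = 1),
      C0 s * A₂ (x s) (y s) + C1 s * (b * A₁ (x s) (y s) + (k - c) * A₂ (x s) (y s)) +
        C2 s * ((b * k / c * if x s = y s then 1 else 0) + (b * k / c - b) * A₁ (x s) (y s)
          + (b * k / c - 1 - k + c) * A₂ (x s) (y s))
      = (b * k / c) * (if ((I:ℤ) = (i:ℤ) ∧ (J:ℤ) = (j:ℤ) - 1) then 1 else 0) := by
    intro s hs
    simp only [Finset.mem_filter] at hs
    have h1 : A₁ (x s) (y s) = 0 := by
      rcases h₁01 (x s) (y s) with h|h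
      · exact h
      · exact absurd h hs.1.2
    have h2 : A₂ (x s) (y s) = 0 := by
      rcases h₂01 (x s) (y s) with h|h
      · exact h
      · exact absurd h hs.2
    have hxy : x s = y s := heq0 _ _ h1 h2
    simp only [hC0, hC1, hC2, he₁, he₂, h1, h2, hxy, hd1, hd2, if_false, if_true]
    norm_num
    split_ifs <;> first | (exfalso; omega) | ring | norm_num
  rw [Finset.sum_congr rfl hclass1, Finset.sum_congr rfl hclass2, Finset.sum_congr rfl hclass0]
  have hfilter2 : (Finset.univ.filter (fun s => ¬ A₁ (x s) (y s) = 1)).filter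
      (fun s => A₂ (x s) (y s) = 1) = Finset.univ.filter (fun s => A₂ (x s) (y s) = 1) := by
    rw [Finset.filter_filter]
    ext s
    simp only [Finset.mem_filter, Finset.mem_univ, true_and]
    constructor
    · rintro ⟨_, h⟩; exact h
    · intro h; exact ⟨by rw [h21 _ _ h]; norm_num, h⟩
  have hcard0 : ((((Finset.univ.filter (fun s => ¬ A₁ (x s) (y s) = 1)).filter
      (fun s => ¬ A₂ (x s) (y s) = 1)).card : ℝ)) = (N:ℝ) - I - J := by
    have t1 : (Finset.univ.filter (fun s => A₁ (x s) (y s) = 1)).card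
        + (Finset.univ.filter (fun s => ¬ A₁ (x s) (y s) = 1)).card = N := by
      rw [Finset.card_filter_add_card_filter_not]; simp
    have t2 : ((Finset.univ.filter (fun s => ¬ A₁ (x s) (y s) = 1)).filter
          (fun s => A₂ (x s) (y s) = 1)).card
        + ((Finset.univ.filter (fun s => ¬ A₁ (x s) (y s) = 1)).filter
          (fun s => ¬ A₂ (x s) (y s) = 1)).card
        = (Finset.univ.filter (fun s => ¬ A₁ (x s) (y s) = 1)).card :=
      Finset.card_filter_add_card_filter_not _
    rw [hfilter2] at t2
    rw [← hIdef] at t1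
    rw [← hJdef] at t2
    have : (I : ℝ) + ((J:ℝ) + (((Finset.univ.filter (fun s => ¬ A₁ (x s) (y s) = 1)).filter
        (fun s => ¬ A₂ (x s) (y s) = 1)).card : ℝ)) = N := by
      exact_mod_cast congrArg (Nat.cast (R := ℝ)) (by omega : I + (J + ((Finset.univ.filter (fun s => ¬ A₁ (x s) (y s) = 1)).filter (fun s => ¬ A₂ (x s) (y s) = 1)).card) = N)
    linarith
  rw [Finset.sum_const, Finset.sum_const, Finset.sum_const, hfilter2, ← hIdef, ← hJdef]
  simp only [nsmul_eq_mul]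
  rw [hcard0]
  -- final arithmetic with mutually exclusive indicators
  have E1 : ((N:ℝ) - I - J) * (if ((I:ℤ) = (i:ℤ) ∧ (J:ℤ) = (j:ℤ) - 1) then (1:ℝ) else 0)
      = ((N:ℝ) - i - j + 1) * (if ((I:ℤ) = (i:ℤ) ∧ (J:ℤ) = (j:ℤ) - 1) then (1:ℝ) else 0) := by
    split_ifs with h
    · obtain ⟨h1, h2⟩ := h
      have r1 := congrArg (fun t : ℤ => (t:ℝ)) h1
      have r2 := congrArg (fun t : ℤ => (t:ℝ)) h2
      push_cast at r1 r2
      rw [r1, r2]; ring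
    · ring
  have E2 : (I:ℝ) * (if ((I:ℤ) = (i:ℤ) ∧ (J:ℤ) = (j:ℤ)) then (1:ℝ) else 0)
      = (i:ℝ) * (if ((I:ℤ) = (i:ℤ) ∧ (J:ℤ) = (j:ℤ)) then (1:ℝ) else 0) := by
    split_ifs with h
    · have r1 := congrArg (fun t : ℤ => (t:ℝ)) h.1
      push_cast at r1
      rw [r1]
    · ring
  have E3 : (J:ℝ) * (if ((I:ℤ) = (i:ℤ) ∧ (J:ℤ) = (j:ℤ)) then (1:ℝ) else 0)
      = (j:ℝ) * (if ((I:ℤ) = (i:ℤ) ∧ (J:ℤ) = (j:ℤ)) then (1:ℝ) else 0) := by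
    split_ifs with h
    · have r2 := congrArg (fun t : ℤ => (t:ℝ)) h.2
      push_cast at r2
      rw [r2]
    · ring
  have E4 : (J:ℝ) * (if ((I:ℤ) = (i:ℤ) ∧ (J:ℤ) = (j:ℤ) + 1) then (1:ℝ) else 0)
      = ((j:ℝ) + 1) * (if ((I:ℤ) = (i:ℤ) ∧ (J:ℤ) = (j:ℤ) + 1) then (1:ℝ) else 0) := by
    split_ifs with h
    · have r2 := congrArg (fun t : ℤ => (t:ℝ)) h.2
      push_cast at r2
      rw [r2]
    · ring
  have E5 : (J:ℝ) * (if ((I:ℤ) = (i:ℤ) - 1 ∧ (J:ℤ) = (j:ℤ) + 1) then (1:ℝ) else 0)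
      = ((j:ℝ) + 1) * (if ((I:ℤ) = (i:ℤ) - 1 ∧ (J:ℤ) = (j:ℤ) + 1) then (1:ℝ) else 0) := by
    split_ifs with h
    · have r2 := congrArg (fun t : ℤ => (t:ℝ)) h.2
      push_cast at r2
      rw [r2]
    · ring
  have E6 : (I:ℝ) * (if ((I:ℤ) = (i:ℤ) + 1 ∧ (J:ℤ) = (j:ℤ) - 1) then (1:ℝ) else 0)
      = ((i:ℝ) + 1) * (if ((I:ℤ) = (i:ℤ) + 1 ∧ (J:ℤ) = (j:ℤ) - 1) then (1:ℝ) else 0) := by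
    split_ifs with h
    · have r1 := congrArg (fun t : ℤ => (t:ℝ)) h.1
      push_cast at r1
      rw [r1]
    · ring
  linear_combination b * E2 + (b * k / c - b) * E6 + E4 + (k - c) * E5
    + (b * k / c - 1 - k + c) * E3 + (b * k / c) * E1
end
end
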